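/- arXiv:2402.04851 — 4 statements merged into one kernel-verified Lean document; each statement's English description precedes it below -/
import Mathlib

section
/- The expected number of steps of a grand zigzag knight's path of size 2n ending on the x-axis, namely (Σ_{P ∈ Z_{2n,0}} (number of steps of P)) / |Z_{2n,0}|, is asymptotically equivalent to ((1+√5)/(2√5))·2n as n → ∞. Equivalently, (Σ_{i=0}^{n} i·C(i, n−i)²) / (Σ_{i=0}^{n} C(i, n−i)²) ∼ ((1+√5)/(2√5))·n. -/
open Filter Topology

/-- A knight step: `N = (1,2)`, `Nb = (1,-2)`, `E = (2,1)`, `Eb = (2,-1)`. -/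
inductive KStep : Type
  | N | Nb | E | Eb

/-- x-component of a step. -/
def KStep.dx : KStep → ℤ
  | .N => 1
  | .Nb => 1
  | .E => 2
  | .Eb => 2

/-- y-component of a step. -/
def KStep.dy : KStep → ℤ
  | .N => 2
  | .Nb => -2
  | .E => 1
  | .Eb => -1

/-- The size of a path: the x-coordinate of its endpoint. -/
def pathSize (p : List KStep) : ℤ := (p.map KStep.dx).sum

/-- The altitude of a path: the y-coordinate of its endpoint. -/
def pathAlt (p : List KStep) : ℤ := (p.map KStep.dy).sum

/-- Zigzag condition: y-components of consecutive steps have opposite signs. -/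
def IsZigzag (p : List KStep) : Prop :=
  List.Chain' (fun a b => a.dy * b.dy < 0) p

namespace Stmt13

instance : DecidableEq KStep := fun a b => by
  cases a <;> cases b <;> first
    | exact isTrue rfl
    | exact isFalse (by intro h; exact KStep.noConfusion h)

instance : DecidablePred IsZigzag := fun p =>
  inferInstanceAs (Decidable (List.IsChain (fun a b : KStep => a.dy * b.dy < 0) p))

instance : Fintype KStep :=
  ⟨{.N, .Nb, .E, .Eb}, fun x => by cases x <;> decide⟩

def upS : Bool → KStep | true => .N | false => .E
def dnS : Bool → KStep | true => .Nb | false => .Eb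

def enc (s : Bool) : List (Bool × Bool) → List KStep
  | [] => []
  | (a, b) :: w => (if s then upS a else dnS a) :: (if s then dnS b else upS b) :: enc s w

def cA (w : List (Bool × Bool)) : ℕ := (w.map Prod.fst).count true
def cB (w : List (Bool × Bool)) : ℕ := (w.map Prod.snd).count true

@[simp] lemma pathSize_nil : pathSize [] = 0 := rfl
@[simp] lemma pathAlt_nil : pathAlt [] = 0 := rfl
@[simp] lemma pathSize_cons (x : KStep) (p : List KStep) :
    pathSize (x :: p) = x.dx + pathSize p := by simp [pathSize]
@[simp] lemma pathAlt_cons (x : KStep) (p : List KStep) :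
    pathAlt (x :: p) = x.dy + pathAlt p := by simp [pathAlt]

@[simp] lemma cA_nil : cA [] = 0 := rfl
@[simp] lemma cB_nil : cB [] = 0 := rfl
@[simp] lemma cA_cons (a b : Bool) (w : List (Bool × Bool)) :
    cA ((a, b) :: w) = cA w + (if a then 1 else 0) := by
  cases a <;> simp [cA, List.count_cons]
@[simp] lemma cB_cons (a b : Bool) (w : List (Bool × Bool)) :
    cB ((a, b) :: w) = cB w + (if b then 1 else 0) := by
  cases b <;> simp [cB, List.count_cons]

lemma length_enc (s : Bool) (w : List (Bool × Bool)) :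
    (enc s w).length = 2 * w.length := by
  induction w with
  | nil => rfl
  | cons p w ih => obtain ⟨a, b⟩ := p; simp [enc, ih]; ring

lemma size_enc (s : Bool) (w : List (Bool × Bool)) :
    pathSize (enc s w) = 4 * (w.length : ℤ) - (cA w : ℤ) - (cB w : ℤ) := by
  induction w with
  | nil => simp [enc]
  | cons p w ih =>
    obtain ⟨a, b⟩ := p
    cases s <;> cases a <;> cases b <;>
      simp [enc, ih, upS, dnS, KStep.dx] <;> push_cast <;> ring

lemma alt_enc (s : Bool) (w : List (Bool × Bool)) :
    pathAlt (enc s w) = (if s then (1 : ℤ) else -1) * ((cA w : ℤ) - (cB w : ℤ)) := by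
  induction w with
  | nil => simp [enc]
  | cons p w ih =>
    obtain ⟨a, b⟩ := p
    cases s <;> cases a <;> cases b <;>
      simp [enc, ih, upS, dnS, KStep.dy] <;> push_cast <;> ring

lemma dy_upS_pos (a : Bool) : 0 < (upS a).dy := by cases a <;> decide
lemma dy_dnS_neg (a : Bool) : (dnS a).dy < 0 := by cases a <;> decide

lemma zigzag_enc (s : Bool) (w : List (Bool × Bool)) : IsZigzag (enc s w) := by
  induction w with
  | nil => exact List.isChain_nil
  | cons p w ih =>
    obtain ⟨a, b⟩ := p
    have h1 : ((if s then upS a else dnS a) : KStep).dy * (if s then dnS b else upS b).dy < 0 := by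
      cases s <;> simp <;>
        [exact mul_neg_of_neg_of_pos (dy_dnS_neg a) (dy_upS_pos b);
         exact mul_neg_of_pos_of_neg (dy_upS_pos a) (dy_dnS_neg b)]
    show List.IsChain _ (_ :: _ :: enc s w)
    rw [List.isChain_cons_cons]
    refine ⟨h1, ?_⟩
    cases w with
    | nil => simp [enc]
    | cons q w' =>
      obtain ⟨a', b'⟩ := q
      rw [show enc s ((a', b') :: w') =
        (if s then upS a' else dnS a') :: (if s then dnS b' else upS b') :: enc s w' from rfl,
        List.isChain_cons_cons]
      refine ⟨?_, ih⟩
      cases s <;> simp <;>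
        [exact mul_neg_of_pos_of_neg (dy_upS_pos b) (dy_dnS_neg a');
         exact mul_neg_of_neg_of_pos (dy_dnS_neg b) (dy_upS_pos a')]

lemma enc_eq_nil_iff {s : Bool} {w : List (Bool × Bool)} : enc s w = [] ↔ w = [] := by
  cases w with
  | nil => simp [enc]
  | cons p w => obtain ⟨a, b⟩ := p; simp [enc]

lemma upS_ne_dnS (a b : Bool) : upS a ≠ dnS b := by cases a <;> cases b <;> decide

lemma upS_inj {a b : Bool} (h : upS a = upS b) : a = b := by
  cases a <;> cases b <;> first | rfl | (exact absurd h (by decide))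

lemma dnS_inj {a b : Bool} (h : dnS a = dnS b) : a = b := by
  cases a <;> cases b <;> first | rfl | (exact absurd h (by decide))

lemma enc_sign_inj {s s' : Bool} {w w' : List (Bool × Bool)} (hw : w ≠ [])
    (h : enc s w = enc s' w') : s = s' := by
  cases w with
  | nil => exact absurd rfl hw
  | cons p w =>
    obtain ⟨a, b⟩ := p
    cases w' with
    | nil => simp [enc] at h
    | cons q w' =>
      obtain ⟨a', b'⟩ := q
      rw [show enc s ((a,b)::w) = (if s then upS a else dnS a) ::
            (if s then dnS b else upS b) :: enc s w from rfl,
          show enc s' ((a',b')::w') = (if s' then upS a' else dnS a') ::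
            (if s' then dnS b' else upS b') :: enc s' w' from rfl] at h
      injection h with h1 _
      cases s <;> cases s' <;> simp at h1
      · rfl
      · exact absurd h1.symm (upS_ne_dnS a' a)
      · exact absurd h1 (upS_ne_dnS a a')
      · rfl

lemma enc_w_inj {s : Bool} : ∀ {w w' : List (Bool × Bool)}, enc s w = enc s w' → w = w' := by
  intro w
  induction w with
  | nil =>
    intro w' h
    have h2 : enc s w' = [] := h.symm
    exact (enc_eq_nil_iff.mp h2).symm
  | cons p w ih =>
    intro w' h
    obtain ⟨a, b⟩ := p
    cases w' with
    | nil => rw [show enc s ([] : List (Bool × Bool)) = [] from rfl] at h; simp [enc] at h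
    | cons q w' =>
      obtain ⟨a', b'⟩ := q
      rw [show enc s ((a,b)::w) = (if s then upS a else dnS a) ::
            (if s then dnS b else upS b) :: enc s w from rfl,
          show enc s ((a',b')::w') = (if s then upS a' else dnS a') ::
            (if s then dnS b' else upS b') :: enc s w' from rfl] at h
      injection h with h1 h
      injection h with h2 h3
      have ha : a = a' := by
        cases s <;> simp at h1
        · exact dnS_inj h1
        · exact upS_inj h1
      have hb : b = b' := by
        cases s <;> simp at h2
        · exact upS_inj h2
        · exact dnS_inj h2
      rw [ha, hb, ih h3]

lemma parity (p : List KStep) : ((p.length : ℤ) + pathSize p + pathAlt p) % 2 = 0 := by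
  induction p with
  | nil => rfl
  | cons x p ih =>
    simp only [List.length_cons, pathSize_cons, pathAlt_cons] at *
    cases x <;> simp only [KStep.dx, KStep.dy] <;> push_cast <;> omega

lemma length_le_size (p : List KStep) : (p.length : ℤ) ≤ pathSize p := by
  induction p with
  | nil => simp
  | cons x p ih =>
    simp only [List.length_cons, pathSize_cons]
    cases x <;> simp only [KStep.dx] <;> push_cast <;> omega

lemma dy_pos_or_neg (x : KStep) : 0 < x.dy ∨ x.dy < 0 := by cases x <;> decide

lemma up_cases {x : KStep} (h : 0 < x.dy) : ∃ a, x = upS a := by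
  cases x <;> first
    | exact ⟨true, rfl⟩ | exact ⟨false, rfl⟩ | (exfalso; revert h; decide)

lemma dn_cases {x : KStep} (h : x.dy < 0) : ∃ a, x = dnS a := by
  cases x <;> first
    | exact ⟨true, rfl⟩ | exact ⟨false, rfl⟩ | (exfalso; revert h; decide)

def sgn (x : KStep) : Bool := decide (0 < x.dy)

lemma sgn_eq_true {x : KStep} (h : 0 < x.dy) : sgn x = true := by simp [sgn, h]
lemma sgn_eq_false {x : KStep} (h : x.dy < 0) : sgn x = false := by
  simp [sgn]; omega

lemma exists_enc : ∀ (k : ℕ) (p : List KStep), p.length = 2 * k → IsZigzag p →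
    ∀ s : Bool, (∀ x ∈ p.head?, sgn x = s) → ∃ w, enc s w = p := by
  intro k
  induction k with
  | zero =>
    intro p hl _ s _
    have : p = [] := List.length_eq_zero_iff.mp (by omega)
    exact ⟨[], by simp [enc, this]⟩
  | succ k ih =>
    intro p hl hz s hs
    match p, hl with
    | x :: y :: rest, hl =>
      have hsx : sgn x = s := hs x (by simp)
      simp only [IsZigzag, List.Chain', List.isChain_cons_cons] at hz
      obtain ⟨hxy, hyr⟩ := hz
      -- sign facts
      have hrest : ∀ z ∈ rest.head?, sgn z = s := by
        cases rest with
        | nil => simp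
        | cons z rest' =>
          intro z' hz'
          simp at hz'
          subst hz'
          have hyz : y.dy * z.dy < 0 := (List.isChain_cons_cons.mp hyr).1
          rw [← hsx]
          rcases dy_pos_or_neg x with hx | hx <;> rcases dy_pos_or_neg z with hzz | hzz
          · rw [sgn_eq_true hx, sgn_eq_true hzz]
          · exfalso
            have hy : y.dy < 0 := by nlinarith
            nlinarith
          · exfalso
            have hy : 0 < y.dy := by nlinarith
            nlinarith
          · rw [sgn_eq_false hx, sgn_eq_false hzz]
      have hlen : rest.length = 2 * k := by simp at hl; omega
      have hzr : IsZigzag rest := (List.IsChain.tail hyr : _)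
      obtain ⟨w', hw'⟩ := ih rest hlen hzr s hrest
      cases s with
      | true =>
        have hx : 0 < x.dy := by
          rcases dy_pos_or_neg x with h | h
          · exact h
          · rw [sgn_eq_false h] at hsx; exact absurd hsx (by decide)
        have hy : y.dy < 0 := by nlinarith
        obtain ⟨a, ha⟩ := up_cases hx
        obtain ⟨b, hb⟩ := dn_cases hy
        exact ⟨(a, b) :: w', by
          rw [show enc true ((a,b)::w') = upS a :: dnS b :: enc true w' from rfl,
              hw', ← ha, ← hb]⟩
      | false =>
        have hx : x.dy < 0 := by
          rcases dy_pos_or_neg x with h | h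
          · rw [sgn_eq_true h] at hsx; exact absurd hsx (by decide)
          · exact h
        have hy : 0 < y.dy := by nlinarith
        obtain ⟨a, ha⟩ := dn_cases hx
        obtain ⟨b, hb⟩ := up_cases hy
        exact ⟨(a, b) :: w', by
          rw [show enc false ((a,b)::w') = dnS a :: upS b :: enc false w' from rfl,
              hw', ← ha, ← hb]⟩

def lists (α : Type*) [DecidableEq α] [Fintype α] : ℕ → Finset (List α)
  | 0 => {[]}
  | (ℓ+1) => ((Finset.univ : Finset α) ×ˢ lists α ℓ).image fun p => p.1 :: p.2

lemma mem_lists {α : Type*} [DecidableEq α] [Fintype α] :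
    ∀ {ℓ : ℕ} {l : List α}, l ∈ lists α ℓ ↔ l.length = ℓ := by
  intro ℓ
  induction ℓ with
  | zero => intro l; simp [lists, List.length_eq_zero_iff]
  | succ ℓ ih =>
    intro l
    cases l with
    | nil => simp [lists]
    | cons a l' => simp [lists, ih]

def countFin (ℓ k : ℕ) : Finset (List Bool) :=
  (lists Bool ℓ).filter fun l => l.count true = k

lemma mem_countFin {ℓ k : ℕ} {l : List Bool} :
    l ∈ countFin ℓ k ↔ l.length = ℓ ∧ l.count true = k := by
  rw [countFin, Finset.mem_filter, mem_lists]

lemma lists_bool_succ (ℓ : ℕ) : lists Bool (ℓ+1) =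
    (lists Bool ℓ).image (true :: ·) ∪ (lists Bool ℓ).image (false :: ·) := by
  ext l
  cases l with
  | nil => simp [mem_lists]
  | cons b l' => cases b <;> simp [mem_lists]

lemma card_countFin : ∀ ℓ k : ℕ, (countFin ℓ k).card = ℓ.choose k := by
  intro ℓ
  induction ℓ with
  | zero =>
    intro k
    cases k <;> simp [countFin, lists, Finset.filter_singleton]
  | succ ℓ ih =>
    intro k
    have hd : Disjoint ((lists Bool ℓ).image (true :: ·))
        ((lists Bool ℓ).image (false :: ·)) := by
      simp only [Finset.disjoint_left, Finset.mem_image]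
      rintro x ⟨a, _, rfl⟩ ⟨b, _, hb⟩
      simp at hb
    have hct : ∀ l : List Bool, (true :: l).count true = l.count true + 1 := by
      intro l; simp [List.count_cons]
    have hcf : ∀ l : List Bool, (false :: l).count true = l.count true := by
      intro l; simp [List.count_cons]
    have hinj_t : Function.Injective (fun l : List Bool => true :: l) := by
      intro x y h; injection h
    have hinj_f : Function.Injective (fun l : List Bool => false :: l) := by
      intro x y h; injection h
    rw [countFin, lists_bool_succ, Finset.filter_union,
        Finset.filter_image, Finset.filter_image,
        Finset.card_union_of_disjoint
          (Disjoint.mono (Finset.image_subset_image (Finset.filter_subset _ _))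
            (Finset.image_subset_image (Finset.filter_subset _ _)) hd),
        Finset.card_image_of_injective _ hinj_t,
        Finset.card_image_of_injective _ hinj_f]
    simp only [hct, hcf]
    cases k with
    | zero =>
      have h1 : (lists Bool ℓ).filter (fun l => l.count true + 1 = 0) = ∅ := by
        apply Finset.filter_false_of_mem; intro l _; omega
      have h2 : (lists Bool ℓ).filter (fun l => l.count true = 0) = countFin ℓ 0 := rfl
      rw [h1, h2]; simp [ih]
    | succ k =>
      have h1 : (lists Bool ℓ).filter (fun l => l.count true + 1 = k + 1)
          = countFin ℓ k := by
        rw [countFin]; congr 1; ext l; omega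
      have h2 : (lists Bool ℓ).filter (fun l => l.count true = k + 1)
          = countFin ℓ (k+1) := rfl
      rw [h1, h2, ih, ih, Nat.choose_succ_succ]

def slice (n ℓ : ℕ) : Finset (List (Bool × Bool)) :=
  (lists (Bool × Bool) ℓ).filter fun w =>
    cA w = cB w ∧ 4 * w.length = 2 * n + cA w + cB w

lemma mem_slice {n ℓ : ℕ} {w : List (Bool × Bool)} :
    w ∈ slice n ℓ ↔ w.length = ℓ ∧ cA w = cB w ∧ 4 * w.length = 2 * n + cA w + cB w := by
  rw [slice, Finset.mem_filter, mem_lists]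

lemma cA_le_length (w : List (Bool × Bool)) : cA w ≤ w.length := by
  calc cA w ≤ (w.map Prod.fst).length := List.count_le_length
    _ = w.length := List.length_map _

lemma cB_le_length (w : List (Bool × Bool)) : cB w ≤ w.length := by
  calc cB w ≤ (w.map Prod.snd).length := List.count_le_length
    _ = w.length := List.length_map _

lemma card_slice (n ℓ : ℕ) (hℓ : ℓ ≤ n) :
    (slice n ℓ).card = (ℓ.choose (n - ℓ))^2 := by
  rcases lt_or_ge (2*ℓ) n with hc | hc
  · have he : slice n ℓ = ∅ := by
      apply Finset.eq_empty_of_forall_notMem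
      intro w hw
      rw [mem_slice] at hw
      obtain ⟨hlen, h1, h2⟩ := hw
      have := cA_le_length w
      omega
    rw [he, Finset.card_empty, Nat.choose_eq_zero_of_lt (by omega), zero_pow (by norm_num)]
  · set k := 2*ℓ - n with hk
    have hcard : (slice n ℓ).card = (countFin ℓ k ×ˢ countFin ℓ k).card := by
      refine Finset.card_bij' (fun w _ => (w.map Prod.fst, w.map Prod.snd))
        (fun p _ => p.1.zip p.2) ?hi ?hj ?left ?right
      case hi =>
        intro w hw
        rw [mem_slice] at hw
        obtain ⟨hlen, h1, h2⟩ := hw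
        have hA : cA w = k := by omega
        have hB : cB w = k := by omega
        have m1 : w.map Prod.fst ∈ countFin ℓ k :=
          mem_countFin.mpr ⟨by rw [List.length_map, hlen], hA⟩
        have m2 : w.map Prod.snd ∈ countFin ℓ k :=
          mem_countFin.mpr ⟨by rw [List.length_map, hlen], hB⟩
        exact Finset.mem_product.mpr ⟨m1, m2⟩
      case hj =>
        intro p hp
        obtain ⟨l1, l2⟩ := p
        obtain ⟨hp1, hp2⟩ := Finset.mem_product.mp hp
        obtain ⟨hl1, hc1⟩ := mem_countFin.mp hp1
        obtain ⟨hl2, hc2⟩ := mem_countFin.mp hp2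
        simp only at hl1 hc1 hl2 hc2 ⊢
        rw [mem_slice]
        have hlen : (l1.zip l2).length = ℓ := by
          rw [List.length_zip, hl1, hl2, min_self]
        have hA : cA (l1.zip l2) = k := by
          rw [cA, List.map_fst_zip (l₁ := l1) (l₂ := l2) (by omega)]; exact hc1
        have hB : cB (l1.zip l2) = k := by
          rw [cB, List.map_snd_zip (l₁ := l1) (l₂ := l2) (by omega)]; exact hc2
        exact ⟨hlen, by omega, by omega⟩
      case left =>
        intro w _
        have h := List.zip_unzip w
        rwa [List.unzip_eq_map] at h
      case right =>
        intro p hp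
        obtain ⟨l1, l2⟩ := p
        obtain ⟨hp1, hp2⟩ := Finset.mem_product.mp hp
        obtain ⟨hl1, _⟩ := mem_countFin.mp hp1
        obtain ⟨hl2, _⟩ := mem_countFin.mp hp2
        simp only at hl1 hl2 ⊢
        have h1 := List.map_fst_zip (l₁ := l1) (l₂ := l2) (by omega)
        have h2 := List.map_snd_zip (l₁ := l1) (l₂ := l2) (by omega)
        rw [h1, h2]
    rw [hcard, Finset.card_product, card_countFin, ← Nat.choose_symm (show k ≤ ℓ by omega)]
    have : ℓ - k = n - ℓ := by omega
    rw [this, sq]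

def FW (n : ℕ) : Finset (List (Bool × Bool)) :=
  (Finset.range (n+1)).biUnion (fun ℓ => slice n ℓ)

lemma mem_FW {n : ℕ} {w : List (Bool × Bool)} :
    w ∈ FW n ↔ cA w = cB w ∧ 4 * w.length = 2 * n + cA w + cB w := by
  rw [FW, Finset.mem_biUnion]
  constructor
  · rintro ⟨ℓ, _, hw⟩
    exact (mem_slice.mp hw).2
  · rintro ⟨h1, h2⟩
    have hA := cA_le_length w
    have hB := cB_le_length w
    exact ⟨w.length, Finset.mem_range.mpr (by omega), mem_slice.mpr ⟨rfl, h1, h2⟩⟩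

def ZP (n : ℕ) (p : List KStep) : Prop :=
  pathSize p = (2 * n : ℤ) ∧ pathAlt p = 0 ∧ IsZigzag p

instance (n : ℕ) : DecidablePred (ZP n) := fun p =>
  inferInstanceAs (Decidable (_ ∧ _ ∧ _))

def Fz (n : ℕ) : Finset (List KStep) :=
  ((Finset.range (2*n+1)).biUnion (fun ℓ => lists KStep ℓ)).filter (ZP n)

lemma mem_Fz {n : ℕ} {p : List KStep} : p ∈ Fz n ↔ ZP n p := by
  rw [Fz, Finset.mem_filter, Finset.mem_biUnion]
  constructor
  · rintro ⟨_, h⟩; exact h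
  · intro h
    refine ⟨⟨p.length, Finset.mem_range.mpr ?_, mem_lists.mpr rfl⟩, h⟩
    have h1 := length_le_size p
    have h2 := h.1
    omega

lemma sum_Fz (n : ℕ) (hn : 1 ≤ n) (F : ℕ → ℝ) :
    ∑ p ∈ Fz n, F p.length
      = 2 * ∑ ℓ ∈ Finset.range (n+1), ((ℓ.choose (n-ℓ) : ℝ))^2 * F (2*ℓ) := by
  have hbij : ∑ sw ∈ (Finset.univ : Finset Bool) ×ˢ FW n, F (2 * sw.2.length)
      = ∑ p ∈ Fz n, F p.length := by
    refine Finset.sum_bij (fun sw _ => enc sw.1 sw.2) ?mem ?inj ?surj ?val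
    case mem =>
      rintro ⟨s, w⟩ hsw
      dsimp only
      have hw : w ∈ FW n := by
        have := (Finset.mem_product.mp hsw).2
        exact this
      obtain ⟨h1, h2⟩ := mem_FW.mp hw
      rw [mem_Fz]
      refine ⟨?_, ?_, zigzag_enc s w⟩
      · rw [size_enc]
        have h2' : (4 * (w.length : ℤ)) = 2 * n + cA w + cB w := by exact_mod_cast h2
        omega
      · rw [alt_enc]
        have h1' : (cA w : ℤ) = (cB w : ℤ) := by exact_mod_cast h1
        rw [h1']; ring
    case inj =>
      rintro ⟨s, w⟩ hsw ⟨s', w'⟩ hsw' h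
      dsimp only at h
      have hw : w ∈ FW n := by
        have := (Finset.mem_product.mp hsw).2
        exact this
      obtain ⟨h1, h2⟩ := mem_FW.mp hw
      have hne : w ≠ [] := by
        intro he; rw [he] at h2; simp at h2; omega
      have hss : s = s' := enc_sign_inj hne h
      rw [hss] at h
      have hww := enc_w_inj h
      simp [hss, hww]
    case surj =>
      intro p hp
      obtain ⟨hsize, halt, hzig⟩ := mem_Fz.mp hp
      have hpar := parity p
      obtain ⟨k, hk⟩ : ∃ k, p.length = 2 * k := by
        rw [hsize, halt] at hpar
        have : p.length % 2 = 0 := by omega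
        exact ⟨p.length / 2, by omega⟩
      have hpne : p ≠ [] := by
        intro he
        rw [he] at hsize
        simp at hsize
        omega
      obtain ⟨x, p', rfl⟩ : ∃ x p', p = x :: p' := by
        cases p with
        | nil => exact absurd rfl hpne
        | cons x p' => exact ⟨x, p', rfl⟩
      obtain ⟨w, hw⟩ := exists_enc k _ hk hzig (sgn x) (by simp)
      refine ⟨(sgn x, w), ?_, hw⟩
      have hsz : pathSize (enc (sgn x) w) = 2 * n := by rw [hw]; exact hsize
      have hal : pathAlt (enc (sgn x) w) = 0 := by rw [hw]; exact halt
      rw [size_enc] at hsz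
      rw [alt_enc] at hal
      have hAB : (cA w : ℤ) = cB w := by
        cases hs : sgn x <;> rw [hs] at hal <;> simp at hal <;> omega
      have hmw : w ∈ FW n := mem_FW.mpr ⟨by exact_mod_cast hAB, by omega⟩
      rw [Finset.mem_product]
      exact ⟨Finset.mem_univ _, hmw⟩
    case val =>
      rintro ⟨s, w⟩ _
      dsimp only
      rw [length_enc]
  have hdisj : (↑(Finset.range (n+1)) : Set ℕ).PairwiseDisjoint (fun ℓ => slice n ℓ) := by
    intro a _ b _ hab
    simp only [Function.onFun, Finset.disjoint_left]
    intro w hwa hwb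
    exact hab ((mem_slice.mp hwa).1 ▸ (mem_slice.mp hwb).1.symm ▸ rfl)
  have hslice : ∀ ℓ ∈ Finset.range (n+1),
      ∑ w ∈ slice n ℓ, F (2 * w.length) = ((ℓ.choose (n-ℓ) : ℝ))^2 * F (2*ℓ) := by
    intro ℓ hℓ
    have hcg : ∀ w ∈ slice n ℓ, F (2 * w.length) = F (2 * ℓ) := by
      intro w hw; rw [(mem_slice.mp hw).1]
    rw [Finset.sum_congr rfl hcg, Finset.sum_const, nsmul_eq_mul,
        card_slice n ℓ (by have := Finset.mem_range.mp hℓ; omega)]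
    push_cast; ring
  have hFW : ∑ w ∈ FW n, F (2 * w.length)
      = ∑ ℓ ∈ Finset.range (n+1), ((ℓ.choose (n-ℓ) : ℝ))^2 * F (2*ℓ) := by
    rw [FW, Finset.sum_biUnion hdisj]
    exact Finset.sum_congr rfl hslice
  have hxeq : ∀ x : Bool, (∑ y ∈ FW n, F (2 * (x, y).2.length))
      = ∑ ℓ ∈ Finset.range (n+1), ((ℓ.choose (n-ℓ) : ℝ))^2 * F (2*ℓ) := fun x => hFW
  rw [← hbij, Finset.sum_product,
      Finset.sum_congr rfl (fun x _ => hxeq x), Finset.sum_const, Finset.card_univ]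
  simp [two_mul]

lemma card_eq (n : ℕ) (hn : 1 ≤ n) :
    (Nat.card {p : List KStep //
        pathSize p = (2 * n : ℤ) ∧ pathAlt p = 0 ∧ IsZigzag p} : ℝ)
      = 2 * ∑ i ∈ Finset.range (n+1), ((i.choose (n-i) : ℝ))^2 := by
  have h1 : Nat.card {p : List KStep //
      pathSize p = (2 * n : ℤ) ∧ pathAlt p = 0 ∧ IsZigzag p} = (Fz n).card := by
    rw [← Nat.card_eq_finsetCard]
    exact Nat.card_congr (Equiv.subtypeEquivRight (fun p => Iff.symm (mem_Fz (n := n) (p := p))))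
  have h2 := sum_Fz n hn (fun _ => (1:ℝ))
  simp only [Finset.sum_const, nsmul_eq_mul, mul_one] at h2
  rw [h1, h2]

lemma steps_eq (n : ℕ) (hn : 1 ≤ n) :
    (∑ᶠ p : {p : List KStep //
        pathSize p = (2 * n : ℤ) ∧ pathAlt p = 0 ∧ IsZigzag p}, (p.1.length : ℝ))
      = 4 * ∑ i ∈ Finset.range (n+1), (i : ℝ) * ((i.choose (n-i) : ℝ))^2 := by
  have h0 : (∑ᶠ p : {p : List KStep //
      pathSize p = (2 * n : ℤ) ∧ pathAlt p = 0 ∧ IsZigzag p}, (p.1.length : ℝ))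
      = ∑ p ∈ Fz n, (p.length : ℝ) := by
    have h1 : (∑ᶠ p : {p : List KStep //
        pathSize p = (2 * n : ℤ) ∧ pathAlt p = 0 ∧ IsZigzag p}, (p.1.length : ℝ))
        = ∑ᶠ (l : List KStep)
            (_ : pathSize l = (2 * n : ℤ) ∧ pathAlt l = 0 ∧ IsZigzag l), (l.length : ℝ) :=
      finsum_subtype_eq_finsum_cond (f := fun l : List KStep => (l.length : ℝ)) _
    rw [h1]
    have heq : ∀ p : List KStep,
        (pathSize p = (2 * n : ℤ) ∧ pathAlt p = 0 ∧ IsZigzag p) = (p ∈ Fz n) :=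
      fun p => propext (Iff.symm mem_Fz)
    refine (finsum_congr fun p => ?_).trans (finsum_mem_finset_eq_sum (fun p => (p.length : ℝ)) (Fz n))
    rw [heq p]
  rw [h0, sum_Fz n hn (fun L => (L : ℝ)), Finset.mul_sum, Finset.mul_sum]
  apply Finset.sum_congr rfl
  intro i _
  push_cast
  ring

end Stmt13


namespace Stmt13A

noncomputable def al : ℝ := (5 - Real.sqrt 5) / 10

lemma hs5 : Real.sqrt 5 ^ 2 = 5 := Real.sq_sqrt (by norm_num)
lemma sqrt5_pos : 0 < Real.sqrt 5 := Real.sqrt_pos.mpr (by norm_num)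
lemma sqrt5_lt : Real.sqrt 5 < 5 := by
  nlinarith [hs5, sqrt5_pos]
lemma two_lt_sqrt5 : 2 < Real.sqrt 5 := by
  nlinarith [hs5, sqrt5_pos]

lemma al_pos : 0 < al := by unfold al; linarith [sqrt5_lt]
lemma al_lt_half : al < 1/2 := by unfold al; linarith [sqrt5_pos]
lemma al_lt_one : al < 1 := lt_trans al_lt_half (by norm_num)

lemma alroot : 5 * al^2 - 5 * al + 1 = 0 := by
  have h : 5 * al^2 - 5 * al + 1 = (Real.sqrt 5 ^ 2 - 5) / 20 := by
    unfold al; ring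
  rw [h, hs5]; norm_num

lemma quad_factor (t : ℝ) : 5*t^2 - 5*t + 1 = 5*(t - al)*(t - (1 - al)) := by
  linear_combination alroot

lemma quad_neg {t : ℝ} (h1 : al < t) (h2 : t < 1 - al) : 5*t^2 - 5*t + 1 < 0 := by
  rw [quad_factor]
  nlinarith

lemma quad_pos {t : ℝ} (h1 : 0 < t) (h2 : t < al) : 0 < 5*t^2 - 5*t + 1 := by
  rw [quad_factor]
  have f1 : 0 < al - t := by linarith
  have f2 : 0 < (1 - al) - t := by linarith [al_lt_half]
  nlinarith [mul_pos f1 f2]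

def b (n j : ℕ) : ℝ := (((n - j).choose j : ℕ) : ℝ)^2

noncomputable def S (n : ℕ) : ℝ := ∑ j ∈ Finset.range (n+1), b n j
noncomputable def U (n : ℕ) : ℝ := ∑ j ∈ Finset.range (n+1), (j : ℝ) * b n j

lemma b_nonneg (n j : ℕ) : 0 ≤ b n j := by unfold b; positivity
lemma b_zero (n : ℕ) : b n 0 = 1 := by simp [b]

lemma S_ge_one (n : ℕ) : 1 ≤ S n := by
  have h := Finset.single_le_sum (f := fun j => b n j)
    (fun j _ => b_nonneg n j) (Finset.mem_range.mpr (Nat.succ_pos n))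
  have h' : b n 0 ≤ S n := h
  rw [b_zero] at h'
  exact h'

lemma S_pos (n : ℕ) : 0 < S n := lt_of_lt_of_le one_pos (S_ge_one n)

lemma U_nonneg (n : ℕ) : 0 ≤ U n :=
  Finset.sum_nonneg fun j _ => mul_nonneg (Nat.cast_nonneg j) (b_nonneg n j)

lemma choose_id {n j : ℕ} (h : 2*(j+1) ≤ n) :
    (n-(j+1)).choose (j+1) * ((j+1) * (n-j))
      = (n-j).choose j * ((n-2*j) * (n-2*j-1)) := by
  have hm : 1 ≤ n - j := by omega
  set m := n - j with hmdef
  have h1 : (m-1).choose (j+1) * (j+1) = (m-1).choose j * (m-1-j) :=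
    Nat.choose_succ_right_eq _ _
  have h2 : (m-1).choose j * m = m.choose j * (m - j) := by
    have h3 := Nat.choose_mul_succ_eq (m-1) j
    have h4 : m - 1 + 1 = m := by omega
    rw [h4] at h3
    exact h3
  have e1 : n - (j+1) = m - 1 := by omega
  have e2 : n - 2*j = m - j := by omega
  have e3 : n - 2*j - 1 = m - 1 - j := by omega
  rw [e1, e3, e2]
  calc (m-1).choose (j+1) * ((j+1) * m)
      = ((m-1).choose (j+1) * (j+1)) * m := by ring
    _ = ((m-1).choose j * (m-1-j)) * m := by rw [h1]
    _ = ((m-1).choose j * m) * (m-1-j) := by ring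
    _ = (m.choose j * (m - j)) * (m-1-j) := by rw [h2]
    _ = m.choose j * ((m - j) * (m-1-j)) := by ring

lemma b_ratio {n j : ℕ} (h : 2*(j+1) ≤ n) :
    b n (j+1) * ((((j+1) * (n-j) : ℕ)) : ℝ)^2
      = b n j * ((((n-2*j) * (n-2*j-1) : ℕ)) : ℝ)^2 := by
  unfold b
  rw [← mul_pow, ← mul_pow, ← Nat.cast_mul, ← Nat.cast_mul, choose_id h]

lemma b_succ_le {u : ℝ} (hu0 : 0 < u) (hu2 : u < 1/2)
    {n j : ℕ} (hj : u * n ≤ j) :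
    b n (j+1) ≤ ((1-2*u)^2/(u*(1-u)))^2 * b n j := by
  set q : ℝ := ((1-2*u)^2/(u*(1-u)))^2 with hqdef
  have hu1 : u < 1 := by linarith
  have huu : 0 < u * (1-u) := mul_pos hu0 (by linarith)
  have hq0 : 0 ≤ q := by positivity
  by_cases h : 2*(j+1) ≤ n
  · have hj1 : 1 ≤ j := by
      rcases Nat.eq_zero_or_pos j with rfl | h1
      · exfalso
        have hn1 : (1:ℝ) ≤ (n:ℝ) := by exact_mod_cast (by omega : 1 ≤ n)
        have hpos : 0 < u * n := mul_pos hu0 (by linarith)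
        simp only [Nat.cast_zero] at hj
        linarith
      · exact h1
    have hid := b_ratio h
    set A : ℕ := (j+1) * (n-j) with hA
    set B : ℕ := (n-2*j) * (n-2*j-1) with hB
    have hjn : j ≤ n := by omega
    have hAr : ((A : ℕ) : ℝ) = ((j:ℝ)+1) * ((n:ℝ) - j) := by
      rw [hA, Nat.cast_mul, Nat.cast_sub hjn]
      push_cast; ring
    have hBr : ((B : ℕ) : ℝ) = ((n:ℝ) - 2*j) * ((n:ℝ) - 2*j - 1) := by
      rw [hB, Nat.cast_mul, Nat.cast_sub (by omega : 1 ≤ n - 2*j),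
        Nat.cast_sub (by omega : 2*j ≤ n)]
      push_cast; ring
    have hN2 : 2*((j:ℝ)+1) ≤ (n:ℝ) := by exact_mod_cast h
    have hJN0 : 0 ≤ (j:ℝ) * ((n:ℝ) - (j:ℝ)) := by
      have : (j:ℝ) ≤ (n:ℝ) := by exact_mod_cast hjn
      have : 0 ≤ (n:ℝ) - j := by linarith
      positivity
    have key : ((B : ℕ) : ℝ) ≤ ((1-2*u)^2/(u*(1-u))) * ((j:ℝ)*((n:ℝ)-j)) := by
      rw [hBr]
      have h1 : (n:ℝ) - 2*j ≤ (1-2*u)*(n:ℝ) := by nlinarith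
      have h1b : 0 ≤ (n:ℝ) - 2*j - 1 := by linarith
      have s0 : 0 ≤ (n:ℝ) - 2*j := by linarith
      have h2 : u*(1-u)*(n:ℝ)^2 ≤ (j:ℝ)*((n:ℝ)-j) := by
        nlinarith [mul_nonneg (by linarith : (0:ℝ) ≤ (j:ℝ) - u*n)
          (by nlinarith : (0:ℝ) ≤ (n:ℝ) - (j:ℝ) - u*n)]
      have hgnn : 0 ≤ (1-2*u)^2/(u*(1-u)) := div_nonneg (sq_nonneg _) huu.le
      calc ((n:ℝ) - 2*j) * ((n:ℝ) - 2*j - 1)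
          ≤ ((n:ℝ) - 2*j) * ((n:ℝ) - 2*j) :=
            mul_le_mul_of_nonneg_left (by linarith) s0
        _ ≤ ((1-2*u)*(n:ℝ)) * ((1-2*u)*(n:ℝ)) := mul_self_le_mul_self s0 h1
        _ = ((1-2*u)^2/(u*(1-u))) * (u*(1-u)*(n:ℝ)^2) := by
            rw [div_mul_eq_mul_div, eq_div_iff huu.ne']
            ring
        _ ≤ ((1-2*u)^2/(u*(1-u))) * ((j:ℝ)*((n:ℝ)-j)) :=
            mul_le_mul_of_nonneg_left h2 hgnn
    have key2 : ((B : ℕ) : ℝ)^2 ≤ q * ((A : ℕ) : ℝ)^2 := by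
      have hBnn : (0:ℝ) ≤ ((B : ℕ) : ℝ) := Nat.cast_nonneg B
      have hle : (j:ℝ)*((n:ℝ)-j) ≤ ((A : ℕ) : ℝ) := by
        rw [hAr]
        have : 0 ≤ (n:ℝ) - j := by
          have : (j:ℝ) ≤ (n:ℝ) := by exact_mod_cast hjn
          linarith
        nlinarith
      calc ((B : ℕ) : ℝ)^2
          ≤ (((1-2*u)^2/(u*(1-u))) * ((j:ℝ)*((n:ℝ)-j)))^2 := by
            apply pow_le_pow_left₀ hBnn key
        _ = q * ((j:ℝ)*((n:ℝ)-j))^2 := by rw [hqdef]; ring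
        _ ≤ q * ((A : ℕ) : ℝ)^2 := by
            apply mul_le_mul_of_nonneg_left (pow_le_pow_left₀ hJN0 hle 2) hq0
    have hApos : 0 < ((A : ℕ) : ℝ)^2 := by
      have hA1 : 0 < A := by
        rw [hA]; exact Nat.mul_pos (Nat.succ_pos j) (by omega)
      have : (0:ℝ) < ((A : ℕ) : ℝ) := by exact_mod_cast hA1
      positivity
    have hchain : b n (j+1) * ((A : ℕ) : ℝ)^2 ≤ (q * b n j) * ((A : ℕ) : ℝ)^2 := by
      calc b n (j+1) * ((A : ℕ) : ℝ)^2 = b n j * ((B : ℕ) : ℝ)^2 := hid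
        _ ≤ b n j * (q * ((A : ℕ) : ℝ)^2) :=
            mul_le_mul_of_nonneg_left key2 (b_nonneg n j)
        _ = (q * b n j) * ((A : ℕ) : ℝ)^2 := by ring
    exact le_of_mul_le_mul_right hchain hApos
  · have hz : (n - (j+1)).choose (j+1) = 0 := Nat.choose_eq_zero_of_lt (by omega)
    have hb0 : b n (j+1) = 0 := by rw [b, hz]; norm_num
    rw [hb0]
    exact mul_nonneg hq0 (b_nonneg n j)

lemma geom_le {q : ℝ} (h0 : 0 ≤ q) (h1 : q < 1) (k : ℕ) :
    ∑ i ∈ Finset.range k, q^i ≤ (1-q)⁻¹ := by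
  have hne : q ≠ 1 := ne_of_lt h1
  have h2 : (0:ℝ) < 1 - q := by linarith
  rw [geom_sum_eq hne]
  have e : (q^k - 1)/(q-1) = (1 - q^k)/(1-q) := by
    rw [div_eq_div_iff (by linarith) (by linarith)]
    ring
  have h3 : 1 - q^k ≤ 1 := by nlinarith [pow_nonneg h0 k]
  rw [e, ← one_div]
  exact (div_le_div_iff_of_pos_right h2).mpr h3

lemma tail_up {u v : ℝ} (hu : al < u) (huv : u < v) (hv : v < 1/2) :
    Tendsto (fun n : ℕ => (∑ j ∈ Finset.Ico (⌈v*n⌉₊) (n+1), b n j) / S n) atTop (𝓝 0) := by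
  have hu0 : 0 < u := lt_trans al_pos hu
  have hu2 : u < 1/2 := lt_trans huv hv
  set q : ℝ := ((1-2*u)^2/(u*(1-u)))^2 with hqdef
  have huu : 0 < u*(1-u) := mul_pos hu0 (by linarith)
  have hq0 : 0 ≤ q := by positivity
  have hq1 : q < 1 := by
    have hquad := quad_neg (t := u) hu (by linarith [al_lt_half] : u < 1 - al)
    have hneg : (1-2*u)^2 < u*(1-u) := by nlinarith
    have hlt : (1-2*u)^2/(u*(1-u)) < 1 := (div_lt_one huu).mpr hneg
    have h0' : 0 ≤ (1-2*u)^2/(u*(1-u)) := div_nonneg (sq_nonneg _) huu.le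
    nlinarith
  have hbound : ∀ n : ℕ, (∑ j ∈ Finset.Ico (⌈v*n⌉₊) (n+1), b n j) / S n
      ≤ q^(⌈v*n⌉₊ - ⌈u*n⌉₊) * (1-q)⁻¹ := by
    intro n
    set m := ⌈u*(n:ℝ)⌉₊ with hmdef
    set M := ⌈v*(n:ℝ)⌉₊ with hMdef
    have hnn : (0:ℝ) ≤ (n:ℝ) := Nat.cast_nonneg n
    have hmn : m ≤ n := Nat.ceil_le.mpr (by nlinarith : u*(n:ℝ) ≤ (n:ℝ))
    have hgeo : ∀ t : ℕ, b n (m + t) ≤ b n m * q^t := by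
      intro t
      induction t with
      | zero => simp
      | succ t ih =>
        have hs : u * n ≤ ((m + t : ℕ) : ℝ) := by
          calc u*n ≤ (m:ℝ) := Nat.le_ceil _
            _ ≤ ((m+t : ℕ):ℝ) := by exact_mod_cast Nat.le_add_right m t
        have hstep := b_succ_le hu0 hu2 hs
        calc b n (m+(t+1)) = b n ((m+t)+1) := by rw [Nat.add_succ]
          _ ≤ q * b n (m+t) := hstep
          _ ≤ q * (b n m * q^t) := mul_le_mul_of_nonneg_left ih hq0
          _ = b n m * q^(t+1) := by ring
    have hterm : ∀ j ∈ Finset.Ico M (n+1), b n j ≤ b n m * q^(j-m) := by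
      intro j hj
      have hj1 := Finset.mem_Ico.mp hj
      have hmM : m ≤ M := Nat.ceil_le_ceil (by nlinarith : u*(n:ℝ) ≤ v*(n:ℝ))
      have hjm : m + (j - m) = j := by omega
      calc b n j = b n (m + (j-m)) := by rw [hjm]
        _ ≤ b n m * q^(j-m) := hgeo _
    have hsum : (∑ j ∈ Finset.Ico M (n+1), b n j)
        ≤ b n m * (q^(M-m) * (1-q)⁻¹) := by
      have hmM : m ≤ M := Nat.ceil_le_ceil (by nlinarith : u*(n:ℝ) ≤ v*(n:ℝ))
      calc ∑ j ∈ Finset.Ico M (n+1), b n j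
          ≤ ∑ j ∈ Finset.Ico M (n+1), b n m * q^(j-m) := Finset.sum_le_sum hterm
        _ = b n m * ∑ j ∈ Finset.Ico M (n+1), q^(j-m) := by rw [Finset.mul_sum]
        _ ≤ b n m * (q^(M-m) * (1-q)⁻¹) := by
            apply mul_le_mul_of_nonneg_left ?_ (b_nonneg n m)
            rcases le_or_gt M (n+1) with hM | hM
            · rw [Finset.sum_Ico_eq_sum_range]
              have hc : ∀ i ∈ Finset.range (n+1-M), q^(M + i - m) = q^(M-m) * q^i := by
                intro i _
                rw [← pow_add]
                congr 1
                omega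
              rw [Finset.sum_congr rfl hc, ← Finset.mul_sum]
              exact mul_le_mul_of_nonneg_left (geom_le hq0 hq1 _) (pow_nonneg hq0 _)
            · rw [Finset.Ico_eq_empty (by omega), Finset.sum_empty]
              exact mul_nonneg (pow_nonneg hq0 _) (inv_nonneg.mpr (by linarith))
    have hbm : b n m ≤ S n := Finset.single_le_sum (f := fun j => b n j)
        (fun j _ => b_nonneg n j) (Finset.mem_range.mpr (by omega))
    rw [div_le_iff₀ (S_pos n)]
    calc (∑ j ∈ Finset.Ico M (n+1), b n j) ≤ b n m * (q^(M-m)*(1-q)⁻¹) := hsum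
      _ ≤ S n * (q^(M-m)*(1-q)⁻¹) := mul_le_mul_of_nonneg_right hbm
          (mul_nonneg (pow_nonneg hq0 _) (inv_nonneg.mpr (by linarith)))
      _ = q^(M-m)*(1-q)⁻¹ * S n := by ring
  have hexp : Tendsto (fun n : ℕ => ⌈v*(n:ℝ)⌉₊ - ⌈u*(n:ℝ)⌉₊) atTop atTop := by
    rw [tendsto_atTop]
    intro C
    have hvu : 0 < v - u := by linarith
    rw [eventually_atTop]
    refine ⟨⌈((C:ℝ)+2)/(v-u)⌉₊, fun n hn => ?_⟩
    have h1 : ((C:ℝ)+2)/(v-u) ≤ (n:ℝ) := le_trans (Nat.le_ceil _) (by exact_mod_cast hn)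
    have h2 : (C:ℝ) + 2 ≤ (v-u)*n := by rw [div_le_iff₀ hvu] at h1; linarith
    have h3 : (v*(n:ℝ) : ℝ) ≤ (⌈v*(n:ℝ)⌉₊ : ℝ) := Nat.le_ceil _
    have h4 : ((⌈u*(n:ℝ)⌉₊ : ℕ) : ℝ) < u*(n:ℝ) + 1 :=
      Nat.ceil_lt_add_one (by positivity)
    have h5 : ((⌈u*(n:ℝ)⌉₊ + C : ℕ) : ℝ) < ((⌈v*(n:ℝ)⌉₊ : ℕ) : ℝ) := by
      push_cast
      nlinarith
    have h6 : ⌈u*(n:ℝ)⌉₊ + C < ⌈v*(n:ℝ)⌉₊ := by exact_mod_cast h5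
    omega
  have htends : Tendsto (fun n : ℕ => q^(⌈v*(n:ℝ)⌉₊ - ⌈u*(n:ℝ)⌉₊) * (1-q)⁻¹)
      atTop (𝓝 0) := by
    have hc := (tendsto_pow_atTop_nhds_zero_of_lt_one hq0 hq1).comp hexp
    have h0 : (0:ℝ) = 0 * (1-q)⁻¹ := by ring
    rw [h0]
    exact hc.mul_const _
  refine squeeze_zero (fun n => ?_) hbound htends
  exact div_nonneg (Finset.sum_nonneg fun j _ => b_nonneg n j) (S_pos n).le

set_option maxHeartbeats 1000000 in
lemma tail_down {v u : ℝ} (hv : 0 < v) (hvu : v < u) (hu : u < al) :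
    Tendsto (fun n : ℕ => (∑ j ∈ Finset.range (⌊v*(n:ℝ)⌋₊), b n j) / S n) atTop (𝓝 0) := by
  have hu0 : 0 < u := lt_trans hv hvu
  have hu2 : u < 1/2 := lt_trans hu al_lt_half
  set g : ℝ := (1-2*u)^2/(u*(1-u)) with hgdef
  have huu : 0 < u*(1-u) := mul_pos hu0 (by linarith)
  have hg1 : 1 < g := by
    have hquad := quad_pos (t := u) hu0 hu
    have hlt : u*(1-u) < (1-2*u)^2 := by nlinarith
    rw [hgdef, lt_div_iff₀ huu]; linarith
  set G : ℝ := (1+g)/2 with hGdef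
  have hG1 : 1 < G := by rw [hGdef]; linarith
  have hGg : G < g := by rw [hGdef]; linarith
  set Q : ℝ := G^2 with hQdef
  have hQ1 : 1 < Q := by nlinarith
  have hQ0 : 0 < Q := by positivity
  set r : ℝ := Q⁻¹ with hrdef
  have hr0 : 0 < r := by positivity
  have hr1 : r < 1 := by
    rw [hrdef]
    exact inv_lt_one_of_one_lt₀ hQ1
  -- eventual step bound
  have hstep : ∀ᶠ n : ℕ in atTop, ∀ j : ℕ, ((j:ℝ)+1) ≤ u*n → Q * b n j ≤ b n (j+1) := by
    rw [eventually_atTop]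
    set C0 : ℝ := G/((g-G)*(1-u)) with hC0
    refine ⟨⌈C0⌉₊ + 1, fun n hn => ?_⟩
    intro j hj
    have hnn : (0:ℝ) ≤ (n:ℝ) := Nat.cast_nonneg n
    have hn1 : (1:ℝ) ≤ (n:ℝ) := by exact_mod_cast (by omega : 1 ≤ n)
    have hnC : C0 ≤ (n:ℝ) := le_trans (Nat.le_ceil _)
      (by exact_mod_cast Nat.le_of_succ_le hn)
    have h2j : 2*(j+1) ≤ n := by
      have h2r : ((2*(j+1) : ℕ) : ℝ) < (n:ℝ) := by push_cast; nlinarith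
      have := (Nat.cast_lt (α := ℝ)).mp h2r
      omega
    have hid := b_ratio h2j
    set A : ℕ := (j+1) * (n-j) with hA
    set B : ℕ := (n-2*j) * (n-2*j-1) with hB
    have hjn : j ≤ n := by omega
    have hAr : ((A : ℕ) : ℝ) = ((j:ℝ)+1) * ((n:ℝ) - j) := by
      rw [hA, Nat.cast_mul, Nat.cast_sub hjn]
      push_cast; ring
    have hBr : ((B : ℕ) : ℝ) = ((n:ℝ) - 2*j) * ((n:ℝ) - 2*j - 1) := by
      rw [hB, Nat.cast_mul, Nat.cast_sub (by omega : 1 ≤ n - 2*j),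
        Nat.cast_sub (by omega : 2*j ≤ n)]
      push_cast; ring
    -- key: G * A ≤ B
    have hgid : g * (u*(1-u)) = (1-2*u)^2 := by rw [hgdef, div_mul_cancel₀ _ huu.ne']
    have hCkey : G ≤ (g-G)*(1-u)*(n:ℝ) := by
      have hpos : 0 < (g-G)*(1-u) := mul_pos (by linarith) (by linarith)
      rw [hC0, div_le_iff₀ hpos] at hnC
      linarith [hnC]
    have keyGA : G * ((A : ℕ) : ℝ) ≤ ((B : ℕ) : ℝ) := by
      rw [hAr, hBr]
      have hb1 : (1-2*u)*(n:ℝ) ≤ (n:ℝ) - 2*j - 1 := by linarith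
      have hb2 : (1-2*u)*(n:ℝ) ≤ (n:ℝ) - 2*j := by linarith
      have hb0 : 0 ≤ (1-2*u)*(n:ℝ) := mul_nonneg (by linarith) hnn
      have hBlow : (1-2*u)^2*(n:ℝ)^2 ≤ ((n:ℝ) - 2*j) * ((n:ℝ) - 2*j - 1) := by
        have hm := mul_le_mul hb2 hb1 hb0 (by linarith : (0:ℝ) ≤ (n:ℝ) - 2*j)
        nlinarith [hm]
      have hAup : ((j:ℝ)+1) * ((n:ℝ) - j) ≤ u*(n:ℝ)*((1-u)*(n:ℝ)+1) := by
        have hf2 : (0:ℝ) ≤ (n:ℝ) - j - u*(n:ℝ) := by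
          have : (0:ℝ) ≤ (1-2*u)*(n:ℝ) := hb0
          linarith
        nlinarith [mul_nonneg (by linarith : (0:ℝ) ≤ u*(n:ℝ) - 1 - j) hf2]
      have hfin : G * (u*(n:ℝ)*((1-u)*(n:ℝ)+1)) ≤ (1-2*u)^2*(n:ℝ)^2 := by
        have e1 : (1-2*u)^2*(n:ℝ)^2 = g*(u*(1-u))*(n:ℝ)^2 := by rw [hgid]
        rw [e1]
        have h3 : G*u ≤ (g-G)*u*(1-u)*(n:ℝ) := by nlinarith [mul_le_mul_of_nonneg_right hCkey hu0.le]
        nlinarith [mul_le_mul_of_nonneg_right h3 hnn]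
      calc G * (((j:ℝ)+1) * ((n:ℝ) - j)) ≤ G * (u*(n:ℝ)*((1-u)*(n:ℝ)+1)) := by
            apply mul_le_mul_of_nonneg_left hAup (by linarith)
        _ ≤ (1-2*u)^2*(n:ℝ)^2 := hfin
        _ ≤ ((n:ℝ) - 2*j) * ((n:ℝ) - 2*j - 1) := hBlow
    -- conclude Q * b n j ≤ b n (j+1)
    have hApos : 0 < ((A : ℕ) : ℝ)^2 := by
      have hA1 : 0 < A := by
        rw [hA]; exact Nat.mul_pos (Nat.succ_pos j) (by omega)
      have : (0:ℝ) < ((A : ℕ) : ℝ) := by exact_mod_cast hA1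
      positivity
    have hQB : Q * ((A : ℕ) : ℝ)^2 ≤ ((B : ℕ) : ℝ)^2 := by
      have hAnn : (0:ℝ) ≤ ((A : ℕ) : ℝ) := Nat.cast_nonneg A
      have := mul_self_le_mul_self (by positivity : (0:ℝ) ≤ G * ((A : ℕ) : ℝ)) keyGA
      rw [hQdef]
      nlinarith
    have hchain : (Q * b n j) * ((A : ℕ) : ℝ)^2 ≤ b n (j+1) * ((A : ℕ) : ℝ)^2 := by
      calc (Q * b n j) * ((A : ℕ) : ℝ)^2 = b n j * (Q * ((A : ℕ) : ℝ)^2) := by ring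
        _ ≤ b n j * ((B : ℕ) : ℝ)^2 := mul_le_mul_of_nonneg_left hQB (b_nonneg n j)
        _ = b n (j+1) * ((A : ℕ) : ℝ)^2 := hid.symm
    exact le_of_mul_le_mul_right hchain hApos
  -- eventual sum bound
  have hbound : ∀ᶠ n : ℕ in atTop,
      (∑ j ∈ Finset.range (⌊v*(n:ℝ)⌋₊), b n j) / S n
        ≤ r^(⌊u*(n:ℝ)⌋₊ - ⌊v*(n:ℝ)⌋₊) * (1-r)⁻¹ := by
    filter_upwards [hstep] with n hstepn
    set c := ⌊v*(n:ℝ)⌋₊ with hcdef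
    set m := ⌊u*(n:ℝ)⌋₊ with hmdef
    have hnn : (0:ℝ) ≤ (n:ℝ) := Nat.cast_nonneg n
    have hcm : c ≤ m := Nat.floor_le_floor (by nlinarith : v*(n:ℝ) ≤ u*(n:ℝ))
    have hmn : m ≤ n := by
      have := Nat.floor_le (by positivity : (0:ℝ) ≤ u*(n:ℝ))
      have h2 : (m:ℝ) ≤ u*(n:ℝ) := this
      have h3 : (m:ℝ) ≤ (n:ℝ) := by nlinarith
      exact_mod_cast h3
    have hdec : ∀ t : ℕ, ∀ j : ℕ, j + t = m → b n j ≤ b n m * r^t := by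
      intro t
      induction t with
      | zero => intro j hj; simp [show j = m by omega]
      | succ t ih =>
        intro j hj
        have hj1 : ((j:ℝ)+1) ≤ u*(n:ℝ) := by
          have h1 : j + 1 ≤ m := by omega
          have h2 : ((j+1 : ℕ):ℝ) ≤ (m:ℝ) := by exact_mod_cast h1
          have h3 : (m:ℝ) ≤ u*(n:ℝ) := Nat.floor_le (by positivity)
          push_cast at h2
          linarith
        have hQs := hstepn j hj1
        have hbj : b n j ≤ r * b n (j+1) := by
          rw [hrdef]
          calc b n j = Q⁻¹ * (Q * b n j) := by field_simp
            _ ≤ Q⁻¹ * b n (j+1) := by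
                apply mul_le_mul_of_nonneg_left hQs (by positivity)
        have hih := ih (j+1) (by omega)
        calc b n j ≤ r * b n (j+1) := hbj
          _ ≤ r * (b n m * r^t) := mul_le_mul_of_nonneg_left hih hr0.le
          _ = b n m * r^(t+1) := by ring
    have hterm : ∀ j ∈ Finset.range c, b n j ≤ b n m * r^(m-j) := by
      intro j hj
      have hjc := Finset.mem_range.mp hj
      exact hdec (m-j) j (by omega)
    have hbm : b n m ≤ S n := Finset.single_le_sum (f := fun j => b n j)
        (fun j _ => b_nonneg n j) (Finset.mem_range.mpr (by omega))
    rcases Nat.eq_zero_or_pos c with hc0 | hc1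
    · rw [hc0, Finset.range_zero, Finset.sum_empty, zero_div]
      exact mul_nonneg (pow_nonneg hr0.le _) (inv_nonneg.mpr (by linarith))
    · have hsum : (∑ j ∈ Finset.range c, b n j) ≤ b n m * (r^(m-c) * (1-r)⁻¹) := by
        calc ∑ j ∈ Finset.range c, b n j
            ≤ ∑ j ∈ Finset.range c, b n m * r^(m-j) := Finset.sum_le_sum hterm
          _ = b n m * ∑ j ∈ Finset.range c, r^(m-j) := by rw [Finset.mul_sum]
          _ ≤ b n m * (r^(m-c) * (1-r)⁻¹) := by
              apply mul_le_mul_of_nonneg_left ?_ (b_nonneg n m)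
              have hrefl := Finset.sum_range_reflect (fun j => r^(m-j)) c
              rw [← hrefl]
              have hc2 : ∀ i ∈ Finset.range c, r^(m-(c-1-i)) = r^(m-c+1) * r^i := by
                intro i hi
                have hic := Finset.mem_range.mp hi
                rw [← pow_add]
                congr 1
                omega
              rw [Finset.sum_congr rfl hc2, ← Finset.mul_sum]
              have hgeom := geom_le hr0.le hr1 c
              calc r^(m-c+1) * ∑ i ∈ Finset.range c, r^i
                  ≤ r^(m-c+1) * (1-r)⁻¹ :=
                    mul_le_mul_of_nonneg_left hgeom (pow_nonneg hr0.le _)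
                _ ≤ r^(m-c) * (1-r)⁻¹ := by
                    apply mul_le_mul_of_nonneg_right ?_ (inv_nonneg.mpr (by linarith))
                    rw [pow_succ]
                    nlinarith [pow_nonneg hr0.le (m-c), pow_le_one₀ (a := r) hr0.le hr1.le (n := m-c)]
      rw [div_le_iff₀ (S_pos n)]
      calc (∑ j ∈ Finset.range c, b n j) ≤ b n m * (r^(m-c)*(1-r)⁻¹) := hsum
        _ ≤ S n * (r^(m-c)*(1-r)⁻¹) := mul_le_mul_of_nonneg_right hbm
            (mul_nonneg (pow_nonneg hr0.le _) (inv_nonneg.mpr (by linarith)))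
        _ = r^(m-c)*(1-r)⁻¹ * S n := by ring
  -- exponent to infinity
  have hexp : Tendsto (fun n : ℕ => ⌊u*(n:ℝ)⌋₊ - ⌊v*(n:ℝ)⌋₊) atTop atTop := by
    rw [tendsto_atTop]
    intro C
    have huv : 0 < u - v := by linarith
    rw [eventually_atTop]
    refine ⟨⌈((C:ℝ)+2)/(u-v)⌉₊, fun n hn => ?_⟩
    have hnn : (0:ℝ) ≤ (n:ℝ) := Nat.cast_nonneg n
    have h1 : ((C:ℝ)+2)/(u-v) ≤ (n:ℝ) := le_trans (Nat.le_ceil _) (by exact_mod_cast hn)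
    have h2 : (C:ℝ) + 2 ≤ (u-v)*n := by rw [div_le_iff₀ huv] at h1; linarith
    have h3 : ((⌊v*(n:ℝ)⌋₊ : ℕ) : ℝ) ≤ v*(n:ℝ) := Nat.floor_le (by positivity)
    have h4 : u*(n:ℝ) < (⌊u*(n:ℝ)⌋₊ : ℝ) + 1 := Nat.lt_floor_add_one _
    have h5 : ((⌊v*(n:ℝ)⌋₊ + C : ℕ) : ℝ) < ((⌊u*(n:ℝ)⌋₊ : ℕ) : ℝ) := by
      push_cast
      nlinarith
    have h6 : ⌊v*(n:ℝ)⌋₊ + C < ⌊u*(n:ℝ)⌋₊ := by exact_mod_cast h5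
    omega
  have htends : Tendsto (fun n : ℕ => r^(⌊u*(n:ℝ)⌋₊ - ⌊v*(n:ℝ)⌋₊) * (1-r)⁻¹)
      atTop (𝓝 0) := by
    have hc := (tendsto_pow_atTop_nhds_zero_of_lt_one hr0.le hr1).comp hexp
    have h0 : (0:ℝ) = 0 * (1-r)⁻¹ := by ring
    rw [h0]
    exact hc.mul_const _
  refine squeeze_zero' (Eventually.of_forall fun n => ?_) hbound htends
  exact div_nonneg (Finset.sum_nonneg fun j _ => b_nonneg n j) (S_pos n).le

lemma R_upper {v : ℝ} (hv0 : 0 ≤ v) (hv1 : v ≤ 1) (n : ℕ) (hn : 1 ≤ n) :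
    U n / (n * S n)
      ≤ v + 1/n + (∑ j ∈ Finset.Ico (⌈v*(n:ℝ)⌉₊) (n+1), b n j) / S n := by
  set M := ⌈v*(n:ℝ)⌉₊ with hMdef
  have hnr : (1:ℝ) ≤ (n:ℝ) := by exact_mod_cast hn
  have hMn : M ≤ n+1 := by
    have : v*(n:ℝ) ≤ ((n+1 : ℕ) : ℝ) := by push_cast; nlinarith
    exact Nat.ceil_le.mpr this
  set T := ∑ j ∈ Finset.Ico M (n+1), b n j with hTdef
  have hsplit : ∑ j ∈ Finset.Ico 0 M, (j:ℝ)*b n j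
      + ∑ j ∈ Finset.Ico M (n+1), (j:ℝ)*b n j
      = ∑ j ∈ Finset.Ico 0 (n+1), (j:ℝ)*b n j :=
    Finset.sum_Ico_consecutive _ (Nat.zero_le M) hMn
  have hU : U n = ∑ j ∈ Finset.Ico 0 M, (j:ℝ)*b n j
      + ∑ j ∈ Finset.Ico M (n+1), (j:ℝ)*b n j := by
    rw [hsplit, U, Finset.range_eq_Ico]
  have hb1 : ∑ j ∈ Finset.Ico 0 M, (j:ℝ)*b n j ≤ (v*n+1) * S n := by
    have hM1 : (M:ℝ) < v*(n:ℝ) + 1 := Nat.ceil_lt_add_one (by positivity)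
    have ht : ∀ j ∈ Finset.Ico 0 M, (j:ℝ)*b n j ≤ (v*n+1) * b n j := by
      intro j hj
      have hjM := (Finset.mem_Ico.mp hj).2
      have : (j:ℝ) < v*n+1 := by
        calc (j:ℝ) ≤ ((M:ℕ):ℝ) - 1 := by
              have : j + 1 ≤ M := hjM
              have := (Nat.cast_le (α := ℝ)).mpr this
              push_cast at this
              linarith
          _ < v*n+1 := by linarith
      exact mul_le_mul_of_nonneg_right this.le (b_nonneg n j)
    calc ∑ j ∈ Finset.Ico 0 M, (j:ℝ)*b n j
        ≤ ∑ j ∈ Finset.Ico 0 M, (v*n+1) * b n j := Finset.sum_le_sum ht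
      _ = (v*n+1) * ∑ j ∈ Finset.Ico 0 M, b n j := by rw [Finset.mul_sum]
      _ ≤ (v*n+1) * S n := by
          apply mul_le_mul_of_nonneg_left ?_ (by positivity)
          rw [S, Finset.range_eq_Ico]
          apply Finset.sum_le_sum_of_subset_of_nonneg
          · exact Finset.Ico_subset_Ico le_rfl hMn
          · exact fun j _ _ => b_nonneg n j
  have hb2 : ∑ j ∈ Finset.Ico M (n+1), (j:ℝ)*b n j ≤ (n:ℝ) * T := by
    rw [hTdef, Finset.mul_sum]
    apply Finset.sum_le_sum
    intro j hj
    have hjn : j ≤ n := by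
      have := (Finset.mem_Ico.mp hj).2; omega
    exact mul_le_mul_of_nonneg_right (by exact_mod_cast hjn) (b_nonneg n j)
  have hnS : 0 < (n:ℝ) * S n := mul_pos (by linarith) (S_pos n)
  rw [div_le_iff₀ hnS]
  have hexp : (v + 1/n + T/S n) * ((n:ℝ) * S n) = v*n*S n + S n + n*T := by
    have hS0 : S n ≠ 0 := (S_pos n).ne'
    have hn0 : (n:ℝ) ≠ 0 := by linarith
    field_simp
  rw [hexp, hU]
  linarith

lemma R_lower {w : ℝ} (hw0 : 0 ≤ w) (hw1 : w ≤ 1) (n : ℕ) (hn : 1 ≤ n) :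
    w - 1/n - (∑ j ∈ Finset.range (⌊w*(n:ℝ)⌋₊), b n j) / S n ≤ U n / (n * S n) := by
  set K := ⌊w*(n:ℝ)⌋₊ with hKdef
  have hnr : (1:ℝ) ≤ (n:ℝ) := by exact_mod_cast hn
  have hKr : ((K:ℕ):ℝ) ≤ w*(n:ℝ) := Nat.floor_le (by positivity)
  have hKn : K ≤ n := by
    have : ((K:ℕ):ℝ) ≤ (n:ℝ) := by nlinarith
    exact_mod_cast this
  set T := ∑ j ∈ Finset.range K, b n j with hTdef
  set W := ∑ j ∈ Finset.Ico K (n+1), b n j with hWdef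
  have hSsplit : S n = T + W := by
    rw [hTdef, hWdef, S, Finset.range_eq_Ico, Finset.range_eq_Ico]
    exact (Finset.sum_Ico_consecutive (fun j => b n j) (Nat.zero_le K) (by omega)).symm
  have hUge : (K:ℝ) * W ≤ U n := by
    have h1 : ∑ j ∈ Finset.Ico K (n+1), (j:ℝ)*b n j ≤ U n := by
      rw [U, Finset.range_eq_Ico]
      apply Finset.sum_le_sum_of_subset_of_nonneg
      · exact Finset.Ico_subset_Ico (Nat.zero_le K) le_rfl
      · exact fun j _ _ => mul_nonneg (Nat.cast_nonneg j) (b_nonneg n j)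
    have h2 : (K:ℝ) * W ≤ ∑ j ∈ Finset.Ico K (n+1), (j:ℝ)*b n j := by
      rw [hWdef, Finset.mul_sum]
      apply Finset.sum_le_sum
      intro j hj
      have := (Finset.mem_Ico.mp hj).1
      exact mul_le_mul_of_nonneg_right (by exact_mod_cast this) (b_nonneg n j)
    linarith
  have hTnn : 0 ≤ T := Finset.sum_nonneg fun j _ => b_nonneg n j
  have hWnn : 0 ≤ W := Finset.sum_nonneg fun j _ => b_nonneg n j
  have hnS : 0 < (n:ℝ) * S n := mul_pos (by linarith) (S_pos n)
  rw [← sub_nonneg]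
  have hexp : U n / (n * S n) - (w - 1/n - T/S n)
      = (U n - (w*n*S n - S n - n*T)) / (n * S n) := by
    have hS0 : S n ≠ 0 := (S_pos n).ne'
    have hn0 : (n:ℝ) ≠ 0 := by linarith
    field_simp
  rw [hexp]
  apply div_nonneg ?_ hnS.le
  have hK1 : w*(n:ℝ) - 1 ≤ (K:ℝ) := by
    have := Nat.lt_floor_add_one (w*(n:ℝ))
    linarith
  have hKS : (w*n - 1) * S n ≤ (K:ℝ) * S n :=
    mul_le_mul_of_nonneg_right hK1 (S_pos n).le
  have hKT : (K:ℝ) * T ≤ (n:ℝ) * T :=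
    mul_le_mul_of_nonneg_right (by exact_mod_cast hKn) hTnn
  have hWS : (K:ℝ) * W = (K:ℝ) * S n - (K:ℝ) * T := by rw [hSsplit]; ring
  nlinarith [hUge, hKS, hKT, hWS]

lemma key : Tendsto (fun n : ℕ => U n / ((n:ℝ) * S n)) atTop (𝓝 al) := by
  rw [Metric.tendsto_atTop]
  intro ε hε
  set e : ℝ := min (ε/4) (min (al/2) ((1/2 - al)/2)) with hedef
  have h12 : al < 1/2 := al_lt_half
  have hal0 := al_pos
  have hepos : 0 < e := by
    apply lt_min (by linarith)
    exact lt_min (by linarith) (by linarith)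
  have he1 : e ≤ ε/4 := min_le_left _ _
  have he2 : e ≤ al/2 := le_trans (min_le_right _ _) (min_le_left _ _)
  have he3 : e ≤ (1/2 - al)/2 := le_trans (min_le_right _ _) (min_le_right _ _)
  have htu := tail_up (u := al + e/2) (v := al + e)
    (by linarith) (by linarith) (by linarith)
  have htd := tail_down (v := al - e) (u := al - e/2)
    (by linarith) (by linarith) (by linarith)
  obtain ⟨N₁, hN₁⟩ := (Metric.tendsto_atTop.mp htu) e hepos
  obtain ⟨N₂, hN₂⟩ := (Metric.tendsto_atTop.mp htd) e hepos
  refine ⟨max (max N₁ N₂) (⌈1/e⌉₊ + 1), fun n hn => ?_⟩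
  have hnN₁ : N₁ ≤ n := le_trans (le_max_left _ _) (le_trans (le_max_left _ _) hn)
  have hnN₂ : N₂ ≤ n := le_trans (le_max_right _ _) (le_trans (le_max_left _ _) hn)
  have hn3 : ⌈1/e⌉₊ + 1 ≤ n := le_trans (le_max_right _ _) hn
  have hn1 : 1 ≤ n := by omega
  have hnr : (1:ℝ) ≤ (n:ℝ) := by exact_mod_cast hn1
  have hnpos : (0:ℝ) < n := by linarith
  have hinv : 1/(n:ℝ) < e := by
    have h1 : (1:ℝ)/e ≤ (⌈1/e⌉₊ : ℝ) := Nat.le_ceil _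
    have h2 : ((⌈1/e⌉₊ + 1 : ℕ) : ℝ) ≤ (n:ℝ) := by exact_mod_cast hn3
    push_cast at h2
    rw [div_lt_iff₀ hnpos]
    rw [div_le_iff₀ hepos] at h1
    nlinarith
  have hTu : (∑ j ∈ Finset.Ico (⌈(al+e)*(n:ℝ)⌉₊) (n+1), b n j)/S n < e := by
    have := hN₁ n hnN₁
    rw [dist_zero_right, Real.norm_eq_abs] at this
    exact lt_of_le_of_lt (le_abs_self _) this
  have hTd : (∑ j ∈ Finset.range (⌊(al-e)*(n:ℝ)⌋₊), b n j)/S n < e := by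
    have := hN₂ n hnN₂
    rw [dist_zero_right, Real.norm_eq_abs] at this
    exact lt_of_le_of_lt (le_abs_self _) this
  have hup := R_upper (v := al + e) (by linarith) (by linarith) n hn1
  have hlo := R_lower (w := al - e) (by linarith) (by linarith) n hn1
  rw [Real.dist_eq, abs_sub_lt_iff]
  constructor
  · calc U n/((n:ℝ)*S n) - al
        ≤ ((al+e) + 1/n + (∑ j ∈ Finset.Ico (⌈(al+e)*(n:ℝ)⌉₊) (n+1), b n j)/S n) - al := by
          linarith
      _ < e + e + e := by linarith
      _ < ε := by linarith
  · calc al - U n/((n:ℝ)*S n)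
        ≤ al - ((al-e) - 1/n - (∑ j ∈ Finset.range (⌊(al-e)*(n:ℝ)⌋₊), b n j)/S n) := by
          linarith
      _ < e + e + e := by linarith
      _ < ε := by linarith

lemma S_eq (n : ℕ) :
    (∑ i ∈ Finset.range (n+1), ((Nat.choose i (n-i) : ℕ) : ℝ)^2) = S n := by
  rw [S, ← Finset.sum_range_reflect (fun i => ((Nat.choose i (n-i) : ℕ) : ℝ)^2) (n+1)]
  apply Finset.sum_congr rfl
  intro j hj
  have hjn : j ≤ n := by have := Finset.mem_range.mp hj; omega
  have h1 : n + 1 - 1 - j = n - j := by omega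
  have h2 : n - (n - j) = j := by omega
  simp only [h1, h2, b]

lemma num_eq (n : ℕ) :
    (∑ i ∈ Finset.range (n+1), (i : ℝ) * ((Nat.choose i (n-i) : ℕ) : ℝ)^2)
      = (n:ℝ) * S n - U n := by
  rw [← Finset.sum_range_reflect
    (fun i => (i : ℝ) * ((Nat.choose i (n-i) : ℕ) : ℝ)^2) (n+1)]
  have hcg : ∀ j ∈ Finset.range (n+1),
      (fun i : ℕ => (i : ℝ) * ((Nat.choose i (n-i) : ℕ) : ℝ)^2) (n + 1 - 1 - j)
        = ((n:ℝ) - j) * b n j := by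
    intro j hj
    have hjn : j ≤ n := by have := Finset.mem_range.mp hj; omega
    have h1 : n + 1 - 1 - j = n - j := by omega
    have h2 : n - (n - j) = j := by omega
    simp only [h1, h2, b]
    rw [Nat.cast_sub hjn]
  rw [Finset.sum_congr rfl hcg]
  rw [show (fun j : ℕ => ((n:ℝ) - j) * b n j) = fun j : ℕ => (n:ℝ) * b n j - (j:ℝ) * b n j
    from funext fun j => by ring]
  rw [Finset.sum_sub_distrib, ← Finset.mul_sum, S, U]

lemma c_eq : (1 + Real.sqrt 5)/(2*Real.sqrt 5) = 1 - al := by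
  have h5 := hs5
  have hp := sqrt5_pos
  rw [al]
  rw [div_eq_iff (by positivity : (2*Real.sqrt 5) ≠ 0)]
  nlinarith [h5]

lemma part2 : Tendsto (fun n : ℕ =>
    ((∑ i ∈ Finset.range (n + 1), (i : ℝ) * (Nat.choose i (n - i) : ℝ) ^ 2) /
        (∑ i ∈ Finset.range (n + 1), (Nat.choose i (n - i) : ℝ) ^ 2)) /
      ((1 + Real.sqrt 5) / (2 * Real.sqrt 5) * n)) atTop (𝓝 1) := by
  have h1al : 0 < 1 - al := by linarith [al_lt_one]
  have hmain : Tendsto (fun n : ℕ => (1 - U n/((n:ℝ)*S n)) / (1-al)) atTop (𝓝 1) := by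
    have h2 : Tendsto (fun n : ℕ => 1 - U n/((n:ℝ)*S n)) atTop (𝓝 (1 - al)) :=
      tendsto_const_nhds.sub key
    have h3 := h2.div_const (1-al)
    simpa [div_self h1al.ne'] using h3
  apply Tendsto.congr' ?_ hmain
  filter_upwards [eventually_ge_atTop 1] with n hn
  have hnr : (1:ℝ) ≤ (n:ℝ) := by exact_mod_cast hn
  have hn0 : (n:ℝ) ≠ 0 := by linarith
  have hS0 : S n ≠ 0 := (S_pos n).ne'
  rw [num_eq n, S_eq n, c_eq]
  have h1 : 1 - U n/((n:ℝ)*S n) = ((n:ℝ)*S n - U n)/((n:ℝ)*S n) := by field_simp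
  rw [h1, div_div, div_div]
  congr 1
  ring

end Stmt13A


theorem stmt13 (steps cnt : ℕ → ℝ)
    (hsteps : ∀ n : ℕ, steps n =
      ∑ᶠ p : {p : List KStep //
          pathSize p = (2 * n : ℤ) ∧ pathAlt p = 0 ∧ IsZigzag p},
        (p.1.length : ℝ))
    (hcnt : ∀ n : ℕ, cnt n =
      (Nat.card {p : List KStep //
          pathSize p = (2 * n : ℤ) ∧ pathAlt p = 0 ∧ IsZigzag p} : ℝ)) :
    Tendsto
      (fun n : ℕ =>
        (steps n / cnt n) / ((1 + Real.sqrt 5) / (2 * Real.sqrt 5) * (2 * n)))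
      atTop (𝓝 1) ∧
    Tendsto
      (fun n : ℕ =>
        ((∑ i ∈ Finset.range (n + 1), (i : ℝ) * (Nat.choose i (n - i) : ℝ) ^ 2) /
            (∑ i ∈ Finset.range (n + 1), (Nat.choose i (n - i) : ℝ) ^ 2)) /
          ((1 + Real.sqrt 5) / (2 * Real.sqrt 5) * n))
      atTop (𝓝 1) := by
  have hpart2 := Stmt13A.part2
  refine ⟨?_, hpart2⟩
  apply Filter.Tendsto.congr' ?_ hpart2
  filter_upwards [Filter.eventually_ge_atTop 1] with n hn
  have hs := Stmt13.steps_eq n hn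
  have hcq := Stmt13.card_eq n hn
  rw [hsteps n, hcnt n, hs, hcq]
  have hS : (0:ℝ) < ∑ i ∈ Finset.range (n + 1), (Nat.choose i (n - i) : ℝ) ^ 2 := by
    rw [show (∑ i ∈ Finset.range (n + 1), (Nat.choose i (n - i) : ℝ) ^ 2)
      = Stmt13A.S n from Stmt13A.S_eq n]
    exact Stmt13A.S_pos n
  have hc : (0:ℝ) < (1 + Real.sqrt 5) / (2 * Real.sqrt 5) := by
    have := Stmt13A.sqrt5_pos
    positivity
  have hnr : (1:ℝ) ≤ (n:ℝ) := by exact_mod_cast hn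
  have hn0 : (n:ℝ) ≠ 0 := by linarith
  rw [div_div, div_div, div_eq_div_iff (by positivity) (by positivity)]
  ring
end

section
/- There is a unique formal power series r ∈ ℚ⟦z⟧ with zero constant term satisfying z³·r² + (z⁴ + z² − 1)·r + z³ = 0. Moreover, for every integer m ≥ 1, if A_m(z) = Σ_{n≥0} a_m(n) zⁿ where a_m(n) is the number of grand zigzag knight's paths of size n staying weakly above the line y = −m, then (z² + z − 1)·A_m(z) = z·r^{m−1} + z²·r^{m} + r^{m+1} − z² − z − 1 in ℚ⟦z⟧. -/
open Filter Topology

/-- The path stays weakly above the horizontal line `y = -m`: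
every point it visits has y-coordinate `≥ -m`. -/
def StaysAbove (m : ℕ) (p : List KStep) : Prop :=
  ∀ q : List KStep, q <+: p → -(m : ℤ) ≤ pathAlt q

/-- Number of grand zigzag knight's paths of size `n` staying weakly above `y = -m`. -/
noncomputable def aboveCount (m n : ℕ) : ℕ :=
  Nat.card {p : List KStep //
    pathSize p = (n : ℤ) ∧ IsZigzag p ∧ StaysAbove m p}

/-- Total number of grand zigzag knight's paths of size `n`. -/
noncomputable def totCount (n : ℕ) : ℕ :=
  Nat.card {p : List KStep // pathSize p = (n : ℤ) ∧ IsZigzag p}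


open PowerSeries

noncomputable def rc : ℕ → ℚ
  | n =>
    if h : n < 3 then 0
    else
      (if n = 3 then 1 else 0) + rc (n-2) + rc (n-4) +
        ∑ p ∈ (Finset.HasAntidiagonal.antidiagonal (n-3)).attach, rc p.1.1 * rc p.1.2
  decreasing_by
  · omega
  · omega
  · have := Finset.HasAntidiagonal.mem_antidiagonal.mp p.2; omega
  · have := Finset.HasAntidiagonal.mem_antidiagonal.mp p.2; omega

noncomputable def rser : PowerSeries ℚ := PowerSeries.mk rc

lemma rc_eq (n : ℕ) (h : ¬ n < 3) :
    rc n = (if n = 3 then 1 else 0) + rc (n-2) + rc (n-4) +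
        ∑ p ∈ Finset.HasAntidiagonal.antidiagonal (n-3), rc p.1 * rc p.2 := by
  rw [rc]
  simp [h, Finset.sum_attach (Finset.HasAntidiagonal.antidiagonal (n-3)) (fun p => rc p.1 * rc p.2)]

lemma rc_small (n : ℕ) (h : n < 3) : rc n = 0 := by rw [rc]; simp [h]

lemma rser_eq : rser = X^3 + X^2 * rser + X^4 * rser + X^3 * rser^2 := by
  ext n
  have c2 : (coeff n) (X^2 * rser) = if 2 ≤ n then rc (n-2) else 0 := by
    rw [coeff_X_pow_mul']; simp [rser]
  have c4 : (coeff n) (X^4 * rser) = if 4 ≤ n then rc (n-4) else 0 := by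
    rw [coeff_X_pow_mul']; simp [rser]
  have c3sq : (coeff n) (X^3 * rser^2) =
      if 3 ≤ n then ∑ p ∈ Finset.HasAntidiagonal.antidiagonal (n-3), rc p.1 * rc p.2 else 0 := by
    rw [coeff_X_pow_mul', pow_two, coeff_mul]; simp [rser]
  have c3 : (coeff n) (X^3 : PowerSeries ℚ) = if n = 3 then 1 else 0 := by
    rw [coeff_X_pow]
  have cr : (coeff n) rser = rc n := by simp [rser]
  rw [map_add, map_add, map_add, c3, c2, c4, c3sq, cr]
  rcases lt_or_ge n 3 with h | h
  · rw [rc_small n h, if_neg (by omega : ¬ n = 3), if_neg (by omega : ¬ 3 ≤ n),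
      if_neg (by omega : ¬ 4 ≤ n)]
    split_ifs with h2
    · rw [rc_small (n-2) (by omega)]; ring
    · ring
  · rw [rc_eq n (by omega), if_pos (by omega : 2 ≤ n), if_pos (by omega : 3 ≤ n)]
    rcases lt_or_ge n 4 with h4 | h4
    · rw [if_neg (by omega : ¬ 4 ≤ n), (by omega : n - 4 = 0), rc_small 0 (by omega)]
    · rw [if_pos h4]

lemma rser_constantCoeff : constantCoeff rser = 0 := by
  have : constantCoeff rser = rc 0 := by simp [rser, ← coeff_zero_eq_constantCoeff]
  rw [this, rc_small 0 (by omega)]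

lemma rser_root : X^3 * rser^2 + (X^4 + X^2 - 1) * rser + X^3 = 0 := by
  have h := rser_eq
  linear_combination -h

lemma root_unique (r : PowerSeries ℚ)
    (h0 : constantCoeff r = 0)
    (he : X^3 * r^2 + (X^4 + X^2 - 1) * r + X^3 = 0) : r = rser := by
  have h1 : (r - rser) * (X^3 * (r + rser) + (X^4 + X^2 - 1)) = 0 := by
    linear_combination he - rser_root
  rcases mul_eq_zero.mp h1 with h2 | h2
  · exact sub_eq_zero.mp h2
  · exfalso
    have := congrArg constantCoeff h2
    simp [constantCoeff_X] at this


-- Chunk A : combinatorial lemmas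
namespace ZZ

def stepOf : Fin 4 → KStep
  | 0 => .N | 1 => .Nb | 2 => .E | 3 => .Eb

instance : Finite KStep :=
  Finite.of_surjective stepOf
    (by intro s; cases s; exacts [⟨0, rfl⟩, ⟨1, rfl⟩, ⟨2, rfl⟩, ⟨3, rfl⟩])

lemma pathSize_nil : pathSize [] = 0 := rfl
lemma pathAlt_nil : pathAlt [] = 0 := rfl
lemma pathSize_cons (s : KStep) (p : List KStep) :
    pathSize (s :: p) = s.dx + pathSize p := by simp [pathSize]
lemma pathAlt_cons (s : KStep) (p : List KStep) :
    pathAlt (s :: p) = s.dy + pathAlt p := by simp [pathAlt]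

lemma dx_pos (s : KStep) : 1 ≤ s.dx := by cases s <;> simp [KStep.dx]

lemma length_le_pathSize (p : List KStep) : (p.length : ℤ) ≤ pathSize p := by
  induction p with
  | nil => simp [pathSize_nil]
  | cons s t ih =>
    rw [pathSize_cons, List.length_cons]
    push_cast
    have := dx_pos s
    linarith

lemma pathSize_nonneg (p : List KStep) : 0 ≤ pathSize p :=
  le_trans (by positivity) (length_le_pathSize p)

lemma pathSize_eq_zero (p : List KStep) (h : pathSize p = 0) : p = [] := by
  have h1 := length_le_pathSize p
  rw [h] at h1
  have : p.length = 0 := by exact_mod_cast le_antisymm (by exact_mod_cast h1) (Nat.zero_le _)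
  exact List.length_eq_zero_iff.mp this

lemma finite_of_size (n : ℕ) (S : Set (List KStep))
    (hS : ∀ p ∈ S, pathSize p = (n : ℤ)) : S.Finite := by
  apply Set.Finite.subset (List.finite_length_le KStep n)
  intro p hp
  have h1 := length_le_pathSize p
  rw [hS p hp] at h1
  simpa using (by exact_mod_cast h1 : p.length ≤ n)

/-! ### start conditions and sets -/

def startsU : List KStep → Prop
  | [] => False
  | s :: _ => 0 < s.dy

def startsD : List KStep → Prop
  | [] => False
  | s :: _ => s.dy < 0

/-- paths with a head condition -/
def PSet (s : KStep) (m n : ℕ) : Set (List KStep) :=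
  {p | pathSize p = (n : ℤ) ∧ IsZigzag p ∧ StaysAbove m p ∧ p.head? = some s}

def USet (m n : ℕ) : Set (List KStep) :=
  {p | pathSize p = (n : ℤ) ∧ IsZigzag p ∧ StaysAbove m p ∧ startsU p}

def DSet (m n : ℕ) : Set (List KStep) :=
  {p | pathSize p = (n : ℤ) ∧ IsZigzag p ∧ StaysAbove m p ∧ startsD p}

/-- "empty or starts down" -/
def ESet (m n : ℕ) : Set (List KStep) :=
  {p | pathSize p = (n : ℤ) ∧ IsZigzag p ∧ StaysAbove m p ∧ (p = [] ∨ startsD p)}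

/-- "empty or starts up" -/
def GSet (m n : ℕ) : Set (List KStep) :=
  {p | pathSize p = (n : ℤ) ∧ IsZigzag p ∧ StaysAbove m p ∧ (p = [] ∨ startsU p)}

def FSet (m n : ℕ) : Set (List KStep) :=
  {p | pathSize p = (n : ℤ) ∧ IsZigzag p ∧ StaysAbove m p}

lemma isZigzag_nil : IsZigzag [] := List.isChain_nil

lemma staysAbove_nil (m : ℕ) : StaysAbove m [] := by
  intro q hq
  rw [List.prefix_nil.mp hq, pathAlt_nil]
  exact neg_nonpos.mpr (Int.natCast_nonneg m)

lemma nil_mem_FSet (m : ℕ) : [] ∈ FSet m 0 :=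
  ⟨rfl, isZigzag_nil, staysAbove_nil m⟩

lemma head_cond_up (s : KStep) (hs : 0 < s.dy) (p : List KStep) :
    (∀ b ∈ p.head?, s.dy * b.dy < 0) ↔ (p = [] ∨ startsD p) := by
  cases p with
  | nil => simp [startsD]
  | cons b t =>
    simp only [List.head?_cons, Option.mem_def, Option.some.injEq, startsD,
      List.cons_ne_nil, false_or]
    constructor
    · intro h
      have := h b rfl
      by_contra hb
      push_neg at hb
      nlinarith
    · rintro h x rfl
      exact mul_neg_of_pos_of_neg hs h

lemma head_cond_down (s : KStep) (hs : s.dy < 0) (p : List KStep) :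
    (∀ b ∈ p.head?, s.dy * b.dy < 0) ↔ (p = [] ∨ startsU p) := by
  cases p with
  | nil => simp [startsU]
  | cons b t =>
    simp only [List.head?_cons, Option.mem_def, Option.some.injEq, startsU,
      List.cons_ne_nil, false_or]
    constructor
    · intro h
      have := h b rfl
      by_contra hb
      push_neg at hb
      nlinarith
    · rintro h x rfl
      exact mul_neg_of_neg_of_pos hs h

lemma staysAbove_cons_iff (m m' : ℕ) (s : KStep) (p : List KStep)
    (hm : (m' : ℤ) = (m : ℤ) + s.dy) :
    StaysAbove m (s :: p) ↔ StaysAbove m' p := by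
  constructor
  · intro h q hq
    have h2 := h (s :: q) (List.cons_prefix_cons.mpr ⟨rfl, hq⟩)
    rw [pathAlt_cons] at h2
    linarith
  · intro h q hq
    rcases List.prefix_cons_iff.mp hq with rfl | ⟨t, rfl, ht⟩
    · rw [pathAlt_nil]
      exact neg_nonpos.mpr (Int.natCast_nonneg m)
    · have := h t ht
      rw [pathAlt_cons]
      linarith

lemma staysAbove_head (m : ℕ) (s : KStep) (p : List KStep)
    (h : StaysAbove m (s :: p)) : -(m : ℤ) ≤ s.dy := by
  have := h [s] ⟨p, rfl⟩
  simpa [pathAlt_cons, pathAlt_nil] using this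

lemma mem_cons_up (s : KStep) (hs : 0 < s.dy) (m m' n n' : ℕ)
    (hm : (m' : ℤ) = (m : ℤ) + s.dy) (hn : (n : ℤ) = (n' : ℤ) + s.dx)
    (p : List KStep) :
    (s :: p) ∈ PSet s m n ↔ p ∈ ESet m' n' := by
  simp only [PSet, ESet, Set.mem_setOf_eq, List.head?_cons, and_true]
  rw [pathSize_cons, IsZigzag, List.Chain', List.isChain_cons, head_cond_up s hs,
    staysAbove_cons_iff m m' s p hm]
  constructor
  · rintro ⟨h1, ⟨h2, h3⟩, h4⟩
    exact ⟨by omega, h3, h4, h2⟩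
  · rintro ⟨h1, h2, h3, h4⟩
    exact ⟨by omega, ⟨h4, h2⟩, h3⟩

lemma mem_cons_down (s : KStep) (hs : s.dy < 0) (m m' n n' : ℕ)
    (hm : (m' : ℤ) = (m : ℤ) + s.dy) (hn : (n : ℤ) = (n' : ℤ) + s.dx)
    (p : List KStep) :
    (s :: p) ∈ PSet s m n ↔ p ∈ GSet m' n' := by
  simp only [PSet, GSet, Set.mem_setOf_eq, List.head?_cons, and_true]
  rw [pathSize_cons, IsZigzag, List.Chain', List.isChain_cons, head_cond_down s hs,
    staysAbove_cons_iff m m' s p hm]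
  constructor
  · rintro ⟨h1, ⟨h2, h3⟩, h4⟩
    exact ⟨by omega, h3, h4, h2⟩
  · rintro ⟨h1, h2, h3, h4⟩
    exact ⟨by omega, ⟨h4, h2⟩, h3⟩

lemma PSet_eq_image_up (s : KStep) (hs : 0 < s.dy) (m m' n n' : ℕ)
    (hm : (m' : ℤ) = (m : ℤ) + s.dy) (hn : (n : ℤ) = (n' : ℤ) + s.dx) :
    PSet s m n = (s :: ·) '' ESet m' n' := by
  ext p
  constructor
  · intro hp
    obtain ⟨h1, h2, h3, h4⟩ := hp
    cases p with
    | nil => simp at h4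
    | cons b t =>
      have hb : b = s := by simpa using h4
      subst b
      exact ⟨t, (mem_cons_up s hs m m' n n' hm hn t).mp ⟨h1, h2, h3, by simp⟩, rfl⟩
  · rintro ⟨t, ht, rfl⟩
    exact (mem_cons_up s hs m m' n n' hm hn t).mpr ht

lemma PSet_eq_image_down (s : KStep) (hs : s.dy < 0) (m m' n n' : ℕ)
    (hm : (m' : ℤ) = (m : ℤ) + s.dy) (hn : (n : ℤ) = (n' : ℤ) + s.dx) :
    PSet s m n = (s :: ·) '' GSet m' n' := by
  ext p
  constructor
  · intro hp
    obtain ⟨h1, h2, h3, h4⟩ := hp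
    cases p with
    | nil => simp at h4
    | cons b t =>
      have hb : b = s := by simpa using h4
      subst b
      exact ⟨t, (mem_cons_down s hs m m' n n' hm hn t).mp ⟨h1, h2, h3, by simp⟩, rfl⟩
  · rintro ⟨t, ht, rfl⟩
    exact (mem_cons_down s hs m m' n n' hm hn t).mpr ht

lemma PSet_empty_small (s : KStep) (m n : ℕ) (h : (n : ℤ) < s.dx) :
    PSet s m n = ∅ := by
  ext p
  simp only [Set.mem_empty_iff_false, iff_false]
  rintro ⟨h1, h2, h3, h4⟩
  cases p with
  | nil => simp at h4
  | cons b t =>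
    have hb : b = s := by simpa using h4
    subst b
    rw [pathSize_cons] at h1
    have := pathSize_nonneg t
    omega

lemma PSet_empty_low (s : KStep) (m n : ℕ) (h : s.dy < -(m : ℤ)) :
    PSet s m n = ∅ := by
  ext p
  simp only [Set.mem_empty_iff_false, iff_false]
  rintro ⟨h1, h2, h3, h4⟩
  cases p with
  | nil => simp at h4
  | cons b t =>
    have hb : b = s := by simpa using h4
    subst b
    have := staysAbove_head m s t h3
    omega

end ZZ


-- Chunk B : counting identities
namespace ZZ

lemma finite_USet (m n : ℕ) : (USet m n).Finite :=
  finite_of_size n _ (fun _ hp => hp.1)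
lemma finite_DSet (m n : ℕ) : (DSet m n).Finite :=
  finite_of_size n _ (fun _ hp => hp.1)
lemma finite_ESet (m n : ℕ) : (ESet m n).Finite :=
  finite_of_size n _ (fun _ hp => hp.1)
lemma finite_GSet (m n : ℕ) : (GSet m n).Finite :=
  finite_of_size n _ (fun _ hp => hp.1)
lemma finite_FSet (m n : ℕ) : (FSet m n).Finite :=
  finite_of_size n _ (fun _ hp => hp.1)
lemma finite_PSet (s : KStep) (m n : ℕ) : (PSet s m n).Finite :=
  finite_of_size n _ (fun _ hp => hp.1)

lemma PSet_disjoint (s s' : KStep) (h : s ≠ s') (m n : ℕ) :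
    Disjoint (PSet s m n) (PSet s' m n) := by
  rw [Set.disjoint_left]
  rintro p ⟨_, _, _, h4⟩ ⟨_, _, _, h4'⟩
  rw [h4] at h4'
  exact h (by injection h4')

lemma splitU (m n : ℕ) : USet m n = PSet KStep.N m n ∪ PSet KStep.E m n := by
  ext p
  constructor
  · rintro ⟨h1, h2, h3, h4⟩
    cases p with
    | nil => exact absurd h4 (by simp [startsU])
    | cons b t =>
      have hb : 0 < b.dy := h4
      cases b
      · exact Or.inl ⟨h1, h2, h3, rfl⟩
      · exact absurd hb (by simp [KStep.dy])
      · exact Or.inr ⟨h1, h2, h3, rfl⟩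
      · exact absurd hb (by simp [KStep.dy])
  · rintro (⟨h1, h2, h3, h4⟩ | ⟨h1, h2, h3, h4⟩) <;>
    · cases p with
      | nil => simp at h4
      | cons b t =>
        refine ⟨h1, h2, h3, ?_⟩
        have hb := (by simpa using h4 : b = _)
        subst b
        simp [startsU, KStep.dy]

lemma splitD (m n : ℕ) : DSet m n = PSet KStep.Nb m n ∪ PSet KStep.Eb m n := by
  ext p
  constructor
  · rintro ⟨h1, h2, h3, h4⟩
    cases p with
    | nil => exact absurd h4 (by simp [startsD])
    | cons b t =>
      have hb : b.dy < 0 := h4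
      cases b
      · exact absurd hb (by simp [KStep.dy])
      · exact Or.inl ⟨h1, h2, h3, rfl⟩
      · exact absurd hb (by simp [KStep.dy])
      · exact Or.inr ⟨h1, h2, h3, rfl⟩
  · rintro (⟨h1, h2, h3, h4⟩ | ⟨h1, h2, h3, h4⟩) <;>
    · cases p with
      | nil => simp at h4
      | cons b t =>
        refine ⟨h1, h2, h3, ?_⟩
        have hb := (by simpa using h4 : b = _)
        subst b
        simp [startsD, KStep.dy]

lemma uCount_eq (m n : ℕ) :
    (USet m n).ncard =
      (if 1 ≤ n then (ESet (m+2) (n-1)).ncard else 0)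
      + (if 2 ≤ n then (ESet (m+1) (n-2)).ncard else 0) := by
  rw [splitU, Set.ncard_union_eq (PSet_disjoint _ _ (by simp) m n)
    (finite_PSet _ m n) (finite_PSet _ m n)]
  congr 1
  · split_ifs with h
    · rw [PSet_eq_image_up KStep.N (by simp [KStep.dy]) m (m+2) n (n-1)
        (by simp only [KStep.dy]; omega)
        (by simp only [KStep.dx]; omega),
        Set.ncard_image_of_injective _ List.cons_injective]
    · rw [PSet_empty_small _ _ _ (by simp only [KStep.dx]; omega), Set.ncard_empty]
  · split_ifs with h
    · rw [PSet_eq_image_up KStep.E (by simp [KStep.dy]) m (m+1) n (n-2)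
        (by simp only [KStep.dy]; omega)
        (by simp only [KStep.dx]; omega),
        Set.ncard_image_of_injective _ List.cons_injective]
    · rw [PSet_empty_small _ _ _ (by simp only [KStep.dx]; omega), Set.ncard_empty]

lemma dCount_eq_big (m n : ℕ) :
    (DSet (m+2) n).ncard =
      (if 1 ≤ n then (GSet m (n-1)).ncard else 0)
      + (if 2 ≤ n then (GSet (m+1) (n-2)).ncard else 0) := by
  rw [splitD, Set.ncard_union_eq (PSet_disjoint _ _ (by simp) (m+2) n)
    (finite_PSet _ _ n) (finite_PSet _ _ n)]
  congr 1
  · split_ifs with h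
    · rw [PSet_eq_image_down KStep.Nb (by simp [KStep.dy]) (m+2) m n (n-1)
        (by simp only [KStep.dy]; omega)
        (by simp only [KStep.dx]; omega),
        Set.ncard_image_of_injective _ List.cons_injective]
    · rw [PSet_empty_small _ _ _ (by simp only [KStep.dx]; omega), Set.ncard_empty]
  · split_ifs with h
    · rw [PSet_eq_image_down KStep.Eb (by simp [KStep.dy]) (m+2) (m+1) n (n-2)
        (by simp only [KStep.dy]; omega)
        (by simp only [KStep.dx]; omega),
        Set.ncard_image_of_injective _ List.cons_injective]
    · rw [PSet_empty_small _ _ _ (by simp only [KStep.dx]; omega), Set.ncard_empty]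

lemma dCount_eq_one (n : ℕ) :
    (DSet 1 n).ncard = (if 2 ≤ n then (GSet 0 (n-2)).ncard else 0) := by
  rw [splitD, Set.ncard_union_eq (PSet_disjoint _ _ (by simp) 1 n)
    (finite_PSet _ _ n) (finite_PSet _ _ n),
    PSet_empty_low KStep.Nb 1 n (by simp [KStep.dy]), Set.ncard_empty, zero_add]
  split_ifs with h
  · rw [PSet_eq_image_down KStep.Eb (by simp [KStep.dy]) 1 0 n (n-2)
      (by simp only [KStep.dy]; omega)
      (by simp only [KStep.dx]; omega),
      Set.ncard_image_of_injective _ List.cons_injective]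
  · rw [PSet_empty_small _ _ _ (by simp only [KStep.dx]; omega), Set.ncard_empty]

lemma dCount_eq_zero (n : ℕ) : (DSet 0 n).ncard = 0 := by
  rw [splitD, Set.ncard_union_eq (PSet_disjoint _ _ (by simp) 0 n)
    (finite_PSet _ _ n) (finite_PSet _ _ n),
    PSet_empty_low KStep.Nb 0 n (by simp [KStep.dy]),
    PSet_empty_low KStep.Eb 0 n (by simp [KStep.dy]), Set.ncard_empty]

lemma USet_zero (m : ℕ) : USet m 0 = ∅ := by
  ext p
  simp only [Set.mem_empty_iff_false, iff_false]
  rintro ⟨h1, _, _, h4⟩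
  rw [pathSize_eq_zero p (by exact_mod_cast h1)] at h4
  exact h4

lemma DSet_zero (m : ℕ) : DSet m 0 = ∅ := by
  ext p
  simp only [Set.mem_empty_iff_false, iff_false]
  rintro ⟨h1, _, _, h4⟩
  rw [pathSize_eq_zero p (by exact_mod_cast h1)] at h4
  exact h4

lemma eCount_eq (m n : ℕ) :
    (ESet m n).ncard = (if n = 0 then 1 else 0) + (DSet m n).ncard := by
  rcases eq_or_ne n 0 with rfl | h
  · rw [if_pos rfl, DSet_zero, Set.ncard_empty]
    have : ESet m 0 = {[]} := by
      ext p
      constructor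
      · rintro ⟨h1, _, _, _⟩
        exact pathSize_eq_zero p (by exact_mod_cast h1)
      · rintro rfl
        exact ⟨by simp [pathSize_nil], isZigzag_nil, staysAbove_nil m, Or.inl rfl⟩
    rw [this, Set.ncard_singleton]
  · rw [if_neg h, zero_add]
    congr 1
    ext p
    constructor
    · rintro ⟨h1, h2, h3, (rfl | h4)⟩
      · (exfalso; rw [pathSize_nil] at h1; exact h (by exact_mod_cast h1.symm))
      · exact ⟨h1, h2, h3, h4⟩
    · rintro ⟨h1, h2, h3, h4⟩
      exact ⟨h1, h2, h3, Or.inr h4⟩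

lemma gCount_eq (m n : ℕ) :
    (GSet m n).ncard = (if n = 0 then 1 else 0) + (USet m n).ncard := by
  rcases eq_or_ne n 0 with rfl | h
  · rw [if_pos rfl, USet_zero, Set.ncard_empty]
    have : GSet m 0 = {[]} := by
      ext p
      constructor
      · rintro ⟨h1, _, _, _⟩
        exact pathSize_eq_zero p (by exact_mod_cast h1)
      · rintro rfl
        exact ⟨by simp [pathSize_nil], isZigzag_nil, staysAbove_nil m, Or.inl rfl⟩
    rw [this, Set.ncard_singleton]
  · rw [if_neg h, zero_add]
    congr 1
    ext p
    constructor
    · rintro ⟨h1, h2, h3, (rfl | h4)⟩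
      · (exfalso; rw [pathSize_nil] at h1; exact h (by exact_mod_cast h1.symm))
      · exact ⟨h1, h2, h3, h4⟩
    · rintro ⟨h1, h2, h3, h4⟩
      exact ⟨h1, h2, h3, Or.inr h4⟩

lemma UD_disjoint (m n : ℕ) : Disjoint (USet m n) (DSet m n) := by
  rw [Set.disjoint_left]
  rintro p ⟨_, _, _, h4⟩ ⟨_, _, _, h4'⟩
  cases p with
  | nil => exact h4
  | cons b t =>
    have : (0:ℤ) < b.dy := h4
    have : b.dy < 0 := h4'
    omega

lemma fCount_eq (m n : ℕ) :
    (FSet m n).ncard =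
      (if n = 0 then 1 else 0) + (USet m n).ncard + (DSet m n).ncard := by
  rcases eq_or_ne n 0 with rfl | h
  · rw [if_pos rfl, USet_zero, DSet_zero, Set.ncard_empty]
    have : FSet m 0 = {[]} := by
      ext p
      constructor
      · rintro ⟨h1, _, _⟩
        exact pathSize_eq_zero p (by exact_mod_cast h1)
      · rintro rfl
        exact nil_mem_FSet m
    rw [this, Set.ncard_singleton]
  · rw [if_neg h, zero_add]
    have hsplit : FSet m n = USet m n ∪ DSet m n := by
      ext p
      constructor
      · rintro ⟨h1, h2, h3⟩
        cases p with
        | nil =>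
          (exfalso; rw [pathSize_nil] at h1; exact h (by exact_mod_cast h1.symm))
        | cons b t =>
          cases b
          · exact Or.inl ⟨h1, h2, h3, by simp [startsU, KStep.dy]⟩
          · exact Or.inr ⟨h1, h2, h3, by simp [startsD, KStep.dy]⟩
          · exact Or.inl ⟨h1, h2, h3, by simp [startsU, KStep.dy]⟩
          · exact Or.inr ⟨h1, h2, h3, by simp [startsD, KStep.dy]⟩
      · rintro (⟨h1, h2, h3, _⟩ | ⟨h1, h2, h3, _⟩) <;> exact ⟨h1, h2, h3⟩
    rw [hsplit, Set.ncard_union_eq (UD_disjoint m n) (finite_USet m n) (finite_DSet m n)]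

lemma aboveCount_eq_ncard (m n : ℕ) : aboveCount m n = (FSet m n).ncard :=
  Nat.card_coe_set_eq _

end ZZ


-- Chunk C : power series system and uniqueness
namespace ZZ
open PowerSeries

noncomputable def Us (m : ℕ) : PowerSeries ℚ :=
  PowerSeries.mk fun n => ((USet m n).ncard : ℚ)
noncomputable def Ds (m : ℕ) : PowerSeries ℚ :=
  PowerSeries.mk fun n => ((DSet m n).ncard : ℚ)
noncomputable def As (m : ℕ) : PowerSeries ℚ :=
  PowerSeries.mk fun n => (aboveCount m n : ℚ)

lemma coeff_lin (S T : PowerSeries ℚ) (n : ℕ) :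
    (coeff n) (X * S + X^2 * T) =
      (if 1 ≤ n then coeff (n-1) S else 0)
      + (if 2 ≤ n then coeff (n-2) T else 0) := by
  have h1 : (X : PowerSeries ℚ) * S = X^1 * S := by rw [pow_one]
  rw [map_add, h1, coeff_X_pow_mul', coeff_X_pow_mul']

lemma coeff_one_add_Ds (m k : ℕ) :
    coeff k (1 + Ds m) = ((ESet m k).ncard : ℚ) := by
  rw [map_add, coeff_one, Ds, coeff_mk, eCount_eq m k]
  push_cast
  rfl

lemma coeff_one_add_Us (m k : ℕ) :
    coeff k (1 + Us m) = ((GSet m k).ncard : ℚ) := by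
  rw [map_add, coeff_one, Us, coeff_mk, gCount_eq m k]
  push_cast
  rfl

lemma S1 (m : ℕ) : As m = 1 + Us m + Ds m := by
  ext n
  rw [As, coeff_mk, aboveCount_eq_ncard, fCount_eq, map_add, map_add, coeff_one,
    Us, Ds, coeff_mk, coeff_mk]
  push_cast
  rfl

lemma S2 (m : ℕ) : Us m = X * (1 + Ds (m+2)) + X^2 * (1 + Ds (m+1)) := by
  ext n
  rw [coeff_lin, coeff_one_add_Ds, coeff_one_add_Ds, Us, coeff_mk, uCount_eq m n]
  push_cast
  rfl

lemma S3 : Ds 0 = 0 := by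
  ext n
  simp [Ds, dCount_eq_zero]

lemma S4 (m : ℕ) : Ds (m+2) = X * (1 + Us m) + X^2 * (1 + Us (m+1)) := by
  ext n
  rw [coeff_lin, coeff_one_add_Us, coeff_one_add_Us, Ds, coeff_mk, dCount_eq_big m n]
  push_cast
  rfl

lemma S5 : Ds 1 = X^2 * (1 + Us 0) := by
  have h : (X:PowerSeries ℚ)^2 * (1 + Us 0) = X * 0 + X^2 * (1 + Us 0) := by ring
  rw [h]
  ext n
  rw [coeff_lin, coeff_one_add_Us, Ds, coeff_mk, dCount_eq_one n]
  push_cast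
  simp

lemma system_unique (U1 D1 U2 D2 : ℕ → PowerSeries ℚ)
    (hU1 : ∀ m, U1 m = X * (1 + D1 (m+2)) + X^2 * (1 + D1 (m+1)))
    (hD10 : D1 0 = 0) (hD11 : D1 1 = X^2 * (1 + U1 0))
    (hD1b : ∀ m, D1 (m+2) = X * (1 + U1 m) + X^2 * (1 + U1 (m+1)))
    (hU2 : ∀ m, U2 m = X * (1 + D2 (m+2)) + X^2 * (1 + D2 (m+1)))
    (hD20 : D2 0 = 0) (hD21 : D2 1 = X^2 * (1 + U2 0))
    (hD2b : ∀ m, D2 (m+2) = X * (1 + U2 m) + X^2 * (1 + U2 (m+1))) :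
    ∀ m, U1 m = U2 m ∧ D1 m = D2 m := by
  have key : ∀ n m, coeff n (U1 m) = coeff n (U2 m)
      ∧ coeff n (D1 m) = coeff n (D2 m) := by
    intro n
    induction n using Nat.strong_induction_on with
    | _ n ih =>
      have hD : ∀ m, coeff n (D1 m) = coeff n (D2 m) := by
        intro m
        match m with
        | 0 => rw [hD10, hD20]
        | 1 =>
          rw [hD11, hD21]
          have h1 : (X:PowerSeries ℚ)^2 * (1 + U1 0) = X * 0 + X^2 * (1 + U1 0) := by ring
          have h2 : (X:PowerSeries ℚ)^2 * (1 + U2 0) = X * 0 + X^2 * (1 + U2 0) := by ring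
          rw [h1, h2, coeff_lin, coeff_lin]
          congr 1
          split_ifs with h
          · rw [map_add, map_add, (ih (n-2) (by omega) 0).1]
          · rfl
        | (m+2) =>
          rw [hD1b, hD2b, coeff_lin, coeff_lin]
          congr 1
          · split_ifs with h
            · rw [map_add, map_add, (ih (n-1) (by omega) m).1]
            · rfl
          · split_ifs with h
            · rw [map_add, map_add, (ih (n-2) (by omega) (m+1)).1]
            · rfl
      refine fun m => ⟨?_, hD m⟩
      rw [hU1, hU2, coeff_lin, coeff_lin]
      congr 1
      · split_ifs with h
        · rw [map_add, map_add, (ih (n-1) (by omega) (m+2)).2]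
        · rfl
      · split_ifs with h
        · rw [map_add, map_add, (ih (n-2) (by omega) (m+1)).2]
        · rfl
  exact fun m => ⟨PowerSeries.ext fun n => (key n m).1, PowerSeries.ext fun n => (key n m).2⟩

end ZZ


-- Chunk D : candidates, algebra, final assembly
namespace ZZ
open PowerSeries

noncomputable def wser : PowerSeries ℚ := PowerSeries.mk fun n => rc (n+3)

lemma hw' : rser = X^3 * wser := by
  ext n
  rw [coeff_X_pow_mul']
  split_ifs with h
  · simp only [rser, wser, coeff_mk]
    congr 1
    omega
  · simp only [rser, coeff_mk]
    exact rc_small n (by omega)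

lemma kk_cc : constantCoeff (1 - X - X^2 : PowerSeries ℚ) = 1 := by
  simp

lemma kk_ne : (1 - X - X^2 : PowerSeries ℚ) ≠ 0 := fun h => by
  have := congrArg constantCoeff h
  rw [kk_cc] at this
  simp at this

lemma ow_cc : constantCoeff (1 + X^2 * wser) = 1 := by
  simp [map_add, map_mul]

lemma ow_ne : (1 + X^2 * wser) ≠ 0 := fun h => by
  have := congrArg constantCoeff h
  rw [ow_cc] at this
  simp at this

noncomputable def aa : PowerSeries ℚ := (X + X^2) * (1 - X - X^2)⁻¹

lemma hka : aa * (1 - X - X^2) = X + X^2 := by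
  rw [aa, mul_assoc, PowerSeries.inv_mul_cancel _ (by rw [kk_cc]; norm_num), mul_one]

noncomputable def ee : PowerSeries ℚ := X * wser * ((1 + X^2 * wser) * (1 - X - X^2))⁻¹

lemma hke : ee * ((1 + X^2 * wser) * (1 - X - X^2)) = X * wser := by
  rw [ee, mul_assoc, PowerSeries.inv_mul_cancel _ (by
    rw [map_mul, ow_cc, kk_cc]; norm_num), mul_one]

noncomputable def Dc : ℕ → PowerSeries ℚ
  | 0 => 0
  | (m+1) => aa - ee * rser^m

noncomputable def Uc (m : ℕ) : PowerSeries ℚ :=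
  X * (1 + Dc (m+2)) + X^2 * (1 + Dc (m+1))

lemma Dc1 (m : ℕ) : Dc (m+1) = aa - ee * rser^m := rfl
lemma Dc2 (m : ℕ) : Dc (m+2) = aa - ee * rser^(m+1) := rfl
lemma Dc3 (m : ℕ) : Dc (m+3) = aa - ee * rser^(m+2) := rfl

lemma V4 (m : ℕ) : Dc (m+2) = X * (1 + Uc m) + X^2 * (1 + Uc (m+1)) := by
  simp only [Uc, Dc1, Dc2, Dc3]
  linear_combination (1 + X + X^2) * hka + (ee * rser^m) * rser_root

lemma V5 : Dc 1 = X^2 * (1 + Uc 0) := by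
  have h0 : Dc 1 = aa - ee := by rw [Dc1, pow_zero, mul_one]
  have h1 : Dc 2 = aa - ee * rser := by rw [Dc2 0, pow_one]
  apply mul_left_cancel₀
    (mul_ne_zero (mul_ne_zero (pow_ne_zero 3 X_ne_zero) kk_ne) ow_ne :
      (X:PowerSeries ℚ)^3 * (1 - X - X^2) * (1 + X^2 * wser) ≠ 0)
  simp only [Uc, h0, h1, Dc1, pow_zero, mul_one]
  linear_combination (X^3*(1-X^3-X^4)*(1+X^2*wser)) * hka
    - (X^3*(1-X^3*rser-X^4)) * hke + X * rser_root
    + (X*(1-X^2-X^4) - X^4*rser) * hw'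

lemma mainAlg (m : ℕ) :
    (1 - X - X^2) * (1 + Uc (m+1) + Dc (m+1)) =
      (1 + X + X^2) - X * rser^m - X^2 * rser^(m+1) - rser^(m+2) := by
  apply mul_left_cancel₀
    (mul_ne_zero (pow_ne_zero 2 X_ne_zero) ow_ne :
      (X:PowerSeries ℚ)^2 * (1 + X^2 * wser) ≠ 0)
  simp only [Uc, Dc1, Dc2, Dc3]
  linear_combination (X^2*(1+X^2*wser)*(1+X+X^2)) * hka
    - (X^2*(X*rser^2+X^2*rser+1)*rser^m) * hke
    + (rser^m*(1 - X^2*(1+X*rser-rser))) * hw'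
    + rser^m * rser_root

lemma Us_eq_Uc (m : ℕ) : Us m = Uc m ∧ Ds m = Dc m :=
  system_unique Us Ds Uc Dc S2 S3 S5 S4 (fun _ => rfl) rfl V5 V4 m

lemma final (m : ℕ) :
    (1 - X - X^2) * As (m+1) =
      (1 + X + X^2) - X * rser^m - X^2 * rser^(m+1) - rser^(m+2) := by
  rw [S1 (m+1), (Us_eq_Uc (m+1)).1, (Us_eq_Uc (m+1)).2]
  exact mainAlg m

end ZZ


theorem stmt15 :
    (∃! r : PowerSeries ℚ,
      PowerSeries.constantCoeff r = 0 ∧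
        PowerSeries.X ^ 3 * r ^ 2 +
            (PowerSeries.X ^ 4 + PowerSeries.X ^ 2 - 1) * r + PowerSeries.X ^ 3 = 0) ∧
    ∀ r : PowerSeries ℚ,
      (PowerSeries.constantCoeff r = 0 ∧
        PowerSeries.X ^ 3 * r ^ 2 +
            (PowerSeries.X ^ 4 + PowerSeries.X ^ 2 - 1) * r + PowerSeries.X ^ 3 = 0) →
      ∀ m : ℕ, 1 ≤ m →
        (PowerSeries.X ^ 2 + PowerSeries.X - 1) *
            PowerSeries.mk (fun n => (aboveCount m n : ℚ)) =
          PowerSeries.X * r ^ (m - 1) + PowerSeries.X ^ 2 * r ^ m + r ^ (m + 1) -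
            PowerSeries.X ^ 2 - PowerSeries.X - 1 := by
  constructor
  · exact ⟨rser, ⟨rser_constantCoeff, rser_root⟩, fun y hy => root_unique y hy.1 hy.2⟩
  · rintro r ⟨h0, he⟩ m hm
    obtain rfl := root_unique r h0 he
    obtain ⟨m', rfl⟩ : ∃ m', m = m' + 1 := ⟨m - 1, by omega⟩
    have h := ZZ.final m'
    have hAs : ZZ.As (m'+1) = PowerSeries.mk (fun n => (aboveCount (m'+1) n : ℚ)) := rfl
    rw [hAs] at h
    simp only [Nat.add_sub_cancel]
    linear_combination -h
end

section
/- Let m ≥ 1 be an integer. Every grand zigzag knight's path of size at most 3m−3 stays weakly above the line y = −m; moreover, the grand zigzag knight's path (N̄E)^{m−1}N̄ has size 3m−2 and visits a point with y-coordinate strictly below −m (its endpoint has y-coordinate −(m+1)). -/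
open Filter Topology

lemma key : ∀ p : List KStep, IsZigzag p →
    -5 ≤ 3 * pathAlt p + pathSize p ∧
    (∀ a t, p = a :: t → 0 < a.dy → 0 ≤ 3 * pathAlt p + pathSize p) := by
  intro p
  induction p with
  | nil => intro _; constructor
           · simp [pathAlt, pathSize]
           · intro a t h; simp at h
  | cons a t ih =>
    intro hz
    have ht : IsZigzag t := hz.tail
    have iht := ih ht
    have halt : pathAlt (a :: t) = a.dy + pathAlt t := by simp [pathAlt]
    have hsize : pathSize (a :: t) = a.dx + pathSize t := by simp [pathSize]
    have hpos : a.dy < 0 → 0 ≤ 3 * pathAlt t + pathSize t := by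
      intro hneg
      cases t with
      | nil => simp [pathAlt, pathSize]
      | cons b t' =>
        have hrel : a.dy * b.dy < 0 := (List.isChain_cons_cons.mp hz).1
        have hb : 0 < b.dy := by
          by_contra h
          push_neg at h
          nlinarith
        exact (iht.2 b t' rfl hb)
    constructor
    · cases a with
      | N => have := iht.1; simp [KStep.dy, KStep.dx] at halt hsize ⊢; omega
      | E => have := iht.1; simp [KStep.dy, KStep.dx] at halt hsize ⊢; omega
      | Nb => have := hpos (by norm_num [KStep.dy]); simp [KStep.dy, KStep.dx] at halt hsize ⊢; omega
      | Eb => have := hpos (by norm_num [KStep.dy]); simp [KStep.dy, KStep.dx] at halt hsize ⊢; omega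
    · intro a' t' h hdy
      obtain ⟨rfl, rfl⟩ : a = a' ∧ t = t' := by simpa using h
      cases a with
      | N => have := iht.1; simp [KStep.dy, KStep.dx] at halt hsize ⊢; omega
      | E => have := iht.1; simp [KStep.dy, KStep.dx] at halt hsize ⊢; omega
      | Nb => simp [KStep.dy] at hdy
      | Eb => simp [KStep.dy] at hdy

lemma wpath (k : ℕ) :
    IsZigzag ((List.replicate k [KStep.Nb, KStep.E]).flatten ++ [KStep.Nb]) ∧
    pathSize ((List.replicate k [KStep.Nb, KStep.E]).flatten ++ [KStep.Nb]) = 3 * k + 1 ∧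
    pathAlt ((List.replicate k [KStep.Nb, KStep.E]).flatten ++ [KStep.Nb]) = -(k + 2 : ℤ) := by
  induction k with
  | zero =>
    refine ⟨?_, ?_, ?_⟩ <;> simp [IsZigzag, pathSize, pathAlt, KStep.dx, KStep.dy, List.Chain', List.isChain_singleton]
  | succ k ih =>
    have hflat : (List.replicate (k+1) [KStep.Nb, KStep.E]).flatten ++ [KStep.Nb]
        = KStep.Nb :: KStep.E :: ((List.replicate k [KStep.Nb, KStep.E]).flatten ++ [KStep.Nb]) := by
      simp [List.replicate_succ]
    rw [hflat]
    obtain ⟨ihz, ihs, iha⟩ := ih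
    refine ⟨?_, ?_, ?_⟩
    · refine List.isChain_cons_cons.mpr ⟨by norm_num [KStep.dy], ?_⟩
      cases hcase : (List.replicate k [KStep.Nb, KStep.E]).flatten ++ [KStep.Nb] with
      | nil => simp at hcase
      | cons b t' =>
        have hb : b = KStep.Nb := by
          cases k with
          | zero =>
            simp at hcase
            exact hcase.1.symm
          | succ k =>
            have : (List.replicate (k+1) [KStep.Nb, KStep.E]).flatten ++ [KStep.Nb]
                = KStep.Nb :: (KStep.E :: ((List.replicate k [KStep.Nb, KStep.E]).flatten ++ [KStep.Nb])) := by
              simp [List.replicate_succ]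
            rw [this] at hcase
            exact (List.cons_eq_cons.mp hcase).1.symm
        subst hb
        rw [hcase] at ihz
        exact List.isChain_cons_cons.mpr ⟨by norm_num [KStep.dy], ihz⟩
    · simp [pathSize] at ihs ⊢
      simp [KStep.dx]
      linarith [ihs]
    · simp [pathAlt] at iha ⊢
      simp [KStep.dy]
      linarith [iha]

theorem stmt16 (m : ℕ) (hm : 1 ≤ m) :
    (∀ p : List KStep, IsZigzag p → pathSize p ≤ 3 * (m : ℤ) - 3 → StaysAbove m p) ∧
    ∀ w : List KStep,
      w = (List.replicate (m - 1) [KStep.Nb, KStep.E]).flatten ++ [KStep.Nb] →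
        IsZigzag w ∧ pathSize w = 3 * (m : ℤ) - 2 ∧
          pathAlt w = -((m : ℤ) + 1) ∧
          ∃ q : List KStep, q <+: w ∧ pathAlt q < -(m : ℤ) := by
  constructor
  · intro p hz hsz q hq
    have hqz : IsZigzag q := hz.prefix hq
    have hkey := (key q hqz).1
    -- pathSize q ≤ pathSize p
    obtain ⟨r, rfl⟩ := hq
    have hr : 0 ≤ pathSize r := by
      have : ∀ s : List KStep, 0 ≤ pathSize s := by
        intro s
        induction s with
        | nil => simp [pathSize]
        | cons a t iht =>
          have : pathSize (a :: t) = a.dx + pathSize t := by simp [pathSize]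
          have ha : 0 ≤ a.dx := by cases a <;> norm_num [KStep.dx]
          omega
      exact this r
    have hsplit : pathSize (q ++ r) = pathSize q + pathSize r := by simp [pathSize]
    omega
  · intro w hw
    obtain ⟨hz, hs, ha⟩ := wpath (m - 1)
    have hcast : ((m - 1 : ℕ) : ℤ) = (m : ℤ) - 1 := by omega
    rw [hcast] at hs ha
    subst hw
    refine ⟨hz, by linarith, by linarith, _, List.prefix_refl _, by linarith⟩
end

section
/- For odd n ≥ 5, there are exactly 2 grand zigzag knight's paths of size n whose only points on the x-axis are the starting point and the endpoint (namely EN̄N⋯NN̄E and its mirror image ĒNN̄⋯N̄NĒ). Moreover, let c_n be the number of grand zigzag knight's paths of size n that stay weakly between the lines y = −1 and y = +1 and end at altitude 0; then c_0 = 1, c_1 = c_2 = c_3 = 0, c_4 = 2, and c_n = c_{n−1} + c_{n−4} for all n ≥ 5. -/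
open Filter Topology

deriving instance DecidableEq for KStep

instance : Fintype KStep :=
  ⟨{KStep.N, KStep.Nb, KStep.E, KStep.Eb}, by intro x; cases x <;> simp⟩

theorem chain_cons' {R : KStep → KStep → Prop} {a b : KStep} {l : List KStep} :
    List.Chain R a (b :: l) ↔ R a b ∧ List.Chain R b l := List.isChain_cons_cons

@[simp] lemma pathSize_nil : pathSize [] = 0 := rfl
@[simp] lemma pathSize_cons (x : KStep) (p : List KStep) :
    pathSize (x :: p) = x.dx + pathSize p := by simp [pathSize]
@[simp] lemma pathAlt_nil : pathAlt [] = 0 := rfl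
@[simp] lemma pathAlt_cons (x : KStep) (p : List KStep) :
    pathAlt (x :: p) = x.dy + pathAlt p := by simp [pathAlt]

lemma zig_cons (x : KStep) (p : List KStep) :
    IsZigzag (x :: p) ↔ List.Chain (fun a b => a.dy * b.dy < 0) x p := Iff.rfl

lemma length_le_size (p : List KStep) : (p.length : ℤ) ≤ pathSize p := by
  induction p with
  | nil => simp
  | cons x p ih => cases x <;> simp [KStep.dx] <;> omega

lemma size_nonneg (p : List KStep) : 0 ≤ pathSize p := by
  have := length_le_size p
  have h2 : (0:ℤ) ≤ p.length := by positivity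
  omega

lemma size_eq_zero {p : List KStep} (h : pathSize p = 0) : p = [] := by
  have := length_le_size p
  rw [h] at this
  have : p.length = 0 := by omega
  exact List.length_eq_zero_iff.mp this

lemma forall_prefix_nil {P : List KStep → Prop} :
    (∀ q, q <+: ([] : List KStep) → P q) ↔ P [] := by
  constructor
  · intro h; exact h [] (by simp)
  · intro h q hq; rw [List.prefix_nil] at hq; subst hq; exact h

lemma forall_prefix_cons {P : List KStep → Prop} {x : KStep} {l : List KStep} :
    (∀ q, q <+: x :: l → P q) ↔ P [] ∧ ∀ t, t <+: l → P (x :: t) := by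
  constructor
  · intro h
    exact ⟨h [] (by simp), fun t ht => h _ (List.cons_prefix_cons.mpr ⟨rfl, ht⟩)⟩
  · rintro ⟨h0, h1⟩ q hq
    cases q with
    | nil => exact h0
    | cons a t =>
      rw [List.cons_prefix_cons] at hq
      obtain ⟨rfl, ht⟩ := hq
      exact h1 t ht

lemma size_parity (p : List KStep) : Even (pathSize p + pathAlt p + p.length) := by
  induction p with
  | nil => simp
  | cons x p ih =>
    rw [Int.even_iff] at *
    cases x <;> simp [KStep.dx, KStep.dy] <;> omega

def SS (n : ℤ) : Set (List KStep) :=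
  {p | pathSize p = n ∧ pathAlt p = 0 ∧ IsZigzag p ∧
    ∀ q, q <+: p → -1 ≤ pathAlt q ∧ pathAlt q ≤ 1}

lemma SS_finite (n : ℤ) : (SS n).Finite := by
  apply (List.finite_length_le KStep n.toNat).subset
  intro p hp
  have h1 := length_le_size p
  rw [hp.1] at h1
  simp only [Set.mem_setOf_eq]
  omega

lemma mem_SS_nil (n : ℤ) : ([] : List KStep) ∈ SS n ↔ n = 0 := by
  constructor
  · intro h; have := h.1; simpa using this.symm
  · rintro rfl
    refine ⟨rfl, rfl, by constructor, ?_⟩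
    rw [forall_prefix_nil]; simp

lemma SS_head {n : ℤ} {x : KStep} {r : List KStep} (hp : (x :: r) ∈ SS n) :
    x = KStep.E ∨ x = KStep.Eb := by
  have hb := hp.2.2.2 [x] (List.cons_prefix_cons.mpr ⟨rfl, by simp⟩)
  cases x <;> simp [KStep.dy] at hb <;> try omega
  · left; rfl
  · right; rfl

lemma SS_ne_nil {n : ℤ} {p : List KStep} (hp : p ∈ SS n) (hn : n ≠ 0) : p ≠ [] := by
  rintro rfl
  exact hn ((mem_SS_nil n).mp hp)

-- chain head congruence
lemma chain_congr {x y : KStep} (h : ∀ z : KStep, x.dy * z.dy < 0 ↔ y.dy * z.dy < 0)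
    (r : List KStep) :
    List.Chain (fun a b => a.dy * b.dy < 0) x r ↔
      List.Chain (fun a b => a.dy * b.dy < 0) y r := by
  cases r with
  | nil => exact ⟨fun _ => List.Chain.nil, fun _ => List.Chain.nil⟩
  | cons a t => simp [chain_cons', h a]

lemma transfer_E_Nb (n : ℤ) (r : List KStep) :
    (KStep.E :: KStep.Nb :: r) ∈ SS n ↔ (KStep.Eb :: r) ∈ SS (n - 1) := by
  simp only [SS, Set.mem_setOf_eq, pathSize_cons, pathAlt_cons, zig_cons,
    chain_cons', forall_prefix_cons, forall_prefix_nil, pathAlt_nil,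
    KStep.dx, KStep.dy]
  have hcc := chain_congr (x := KStep.Nb) (y := KStep.Eb)
    (by intro z; cases z <;> simp [KStep.dy] <;> omega) r
  constructor
  · rintro ⟨h1, h2, ⟨hrel, h3⟩, h4⟩
    refine ⟨by omega, by omega, hcc.mp h3, ?_⟩
    constructor
    · simp
    · intro t ht
      have := h4.2.2 t ht
      omega
  · rintro ⟨h1, h2, h3, h4⟩
    refine ⟨by omega, by omega, ⟨by norm_num, hcc.mpr h3⟩, ?_⟩
    refine ⟨by norm_num, by norm_num, ?_⟩
    intro t ht
    have := h4.2 t ht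
    omega

lemma transfer_Eb_N (n : ℤ) (r : List KStep) :
    (KStep.Eb :: KStep.N :: r) ∈ SS n ↔ (KStep.E :: r) ∈ SS (n - 1) := by
  simp only [SS, Set.mem_setOf_eq, pathSize_cons, pathAlt_cons, zig_cons,
    chain_cons', forall_prefix_cons, forall_prefix_nil, pathAlt_nil,
    KStep.dx, KStep.dy]
  have hcc := chain_congr (x := KStep.N) (y := KStep.E)
    (by intro z; cases z <;> simp [KStep.dy] <;> omega) r
  constructor
  · rintro ⟨h1, h2, ⟨hrel, h3⟩, h4⟩
    refine ⟨by omega, by omega, hcc.mp h3, ?_⟩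
    refine ⟨by norm_num, ?_⟩
    intro t ht
    have := h4.2.2 t ht
    omega
  · rintro ⟨h1, h2, h3, h4⟩
    refine ⟨by omega, by omega, ⟨by norm_num, hcc.mpr h3⟩, ?_⟩
    refine ⟨by norm_num, by norm_num, ?_⟩
    intro t ht
    have := h4.2 t ht
    omega

lemma transfer_E_Eb (n : ℤ) (r : List KStep) :
    (KStep.E :: KStep.Eb :: r) ∈ SS n ↔
      (r ∈ SS (n - 4) ∧ (r = [] ∨ ∃ r', r = KStep.E :: r')) := by
  simp only [SS, Set.mem_setOf_eq, pathSize_cons, pathAlt_cons, zig_cons,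
    chain_cons', forall_prefix_cons, forall_prefix_nil, pathAlt_nil,
    KStep.dx, KStep.dy]
  constructor
  · rintro ⟨h1, h2, ⟨hrel, h3⟩, h4⟩
    have hb : ∀ t, t <+: r → -1 ≤ pathAlt t ∧ pathAlt t ≤ 1 := by
      intro t ht
      have := h4.2.2 t ht
      omega
    have hhead : r = [] ∨ ∃ r', r = KStep.E :: r' := by
      cases r with
      | nil => left; rfl
      | cons z r' =>
        right
        rw [chain_cons'] at h3
        have hz := h3.1
        have hbz := hb [z] (List.cons_prefix_cons.mpr ⟨rfl, by simp⟩)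
        cases z <;> simp [KStep.dy] at hz hbz ⊢ <;> omega
    have hchain : IsZigzag r := by
      cases r with
      | nil => constructor
      | cons z r' => exact (chain_cons'.mp h3).2
    exact ⟨⟨by omega, by omega, hchain, hb⟩, hhead⟩
  · rintro ⟨⟨h1, h2, h3, h4⟩, hhead⟩
    have hch : List.Chain (fun a b => a.dy * b.dy < 0) KStep.Eb r := by
      rcases hhead with rfl | ⟨r', rfl⟩
      · constructor
      · rw [chain_cons']
        exact ⟨by norm_num [KStep.dy], h3⟩
    refine ⟨by omega, by omega, ⟨by norm_num, hch⟩, by norm_num, by norm_num, ?_⟩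
    intro t ht
    have := h4 t ht
    omega

lemma transfer_Eb_E (n : ℤ) (r : List KStep) :
    (KStep.Eb :: KStep.E :: r) ∈ SS n ↔
      (r ∈ SS (n - 4) ∧ (r = [] ∨ ∃ r', r = KStep.Eb :: r')) := by
  simp only [SS, Set.mem_setOf_eq, pathSize_cons, pathAlt_cons, zig_cons,
    chain_cons', forall_prefix_cons, forall_prefix_nil, pathAlt_nil,
    KStep.dx, KStep.dy]
  constructor
  · rintro ⟨h1, h2, ⟨hrel, h3⟩, h4⟩
    have hb : ∀ t, t <+: r → -1 ≤ pathAlt t ∧ pathAlt t ≤ 1 := by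
      intro t ht
      have := h4.2.2 t ht
      omega
    have hhead : r = [] ∨ ∃ r', r = KStep.Eb :: r' := by
      cases r with
      | nil => left; rfl
      | cons z r' =>
        right
        rw [chain_cons'] at h3
        have hz := h3.1
        have hbz := hb [z] (List.cons_prefix_cons.mpr ⟨rfl, by simp⟩)
        cases z <;> simp [KStep.dy] at hz hbz ⊢ <;> omega
    have hchain : IsZigzag r := by
      cases r with
      | nil => constructor
      | cons z r' => exact (chain_cons'.mp h3).2
    exact ⟨⟨by omega, by omega, hchain, hb⟩, hhead⟩
  · rintro ⟨⟨h1, h2, h3, h4⟩, hhead⟩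
    have hch : List.Chain (fun a b => a.dy * b.dy < 0) KStep.E r := by
      rcases hhead with rfl | ⟨r', rfl⟩
      · constructor
      · rw [chain_cons']
        exact ⟨by norm_num [KStep.dy], h3⟩
    refine ⟨by omega, by omega, ⟨by norm_num, hch⟩, by norm_num, by norm_num, ?_⟩
    intro t ht
    have := h4 t ht
    omega

lemma SS_zero : SS 0 = {[]} := by
  ext p
  simp only [Set.mem_singleton_iff]
  constructor
  · intro hp; exact size_eq_zero hp.1
  · rintro rfl; exact (mem_SS_nil 0).mpr rfl

lemma SS_cons_cases {n : ℤ} {p : List KStep} (hp : p ∈ SS n) (hn : n ≠ 0) :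
    (∃ r, p = KStep.E :: r) ∨ (∃ r, p = KStep.Eb :: r) := by
  have hne := SS_ne_nil hp hn
  obtain ⟨x, r, rfl⟩ := List.exists_cons_of_ne_nil hne
  rcases SS_head hp with rfl | rfl
  · exact Or.inl ⟨r, rfl⟩
  · exact Or.inr ⟨r, rfl⟩

lemma SS_one : SS 1 = ∅ := by
  ext p
  simp only [Set.mem_empty_iff_false, iff_false]
  intro hp
  rcases SS_cons_cases hp (by norm_num) with ⟨r, rfl⟩ | ⟨r, rfl⟩ <;>
  · have h1 := hp.1
    have h2 := size_nonneg r
    simp [KStep.dx] at h1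
    omega

lemma SS_two : SS 2 = ∅ := by
  ext p
  simp only [Set.mem_empty_iff_false, iff_false]
  intro hp
  rcases SS_cons_cases hp (by norm_num) with ⟨r, rfl⟩ | ⟨r, rfl⟩ <;>
  · have h1 := hp.1
    simp [KStep.dx] at h1
    have : r = [] := size_eq_zero (by omega)
    subst this
    have h2 := hp.2.1
    simp [KStep.dy] at h2

lemma SS_three : SS 3 = ∅ := by
  ext p
  simp only [Set.mem_empty_iff_false, iff_false]
  intro hp
  rcases SS_cons_cases hp (by norm_num) with ⟨r, rfl⟩ | ⟨r, rfl⟩ <;>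
  · have h1 := hp.1
    simp [KStep.dx] at h1
    have hr1 : pathSize r = 1 := by omega
    have hlen := length_le_size r
    rw [hr1] at hlen
    have hne : r ≠ [] := by rintro rfl; simp at hr1
    have hlen1 : r.length = 1 := by
      have := List.length_pos_iff.mpr hne; omega
    obtain ⟨z, rfl⟩ := List.length_eq_one_iff.mp hlen1
    have h2 := hp.2.1
    cases z <;> simp [KStep.dy, KStep.dx] at h2 hr1 <;> omega

lemma SS_four : SS 4 = {[KStep.E, KStep.Eb], [KStep.Eb, KStep.E]} := by
  ext p
  simp only [Set.mem_insert_iff, Set.mem_singleton_iff]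
  constructor
  · intro hp
    rcases SS_cons_cases hp (by norm_num) with ⟨r, rfl⟩ | ⟨r, rfl⟩
    · left
      have h1 := hp.1
      simp [KStep.dx] at h1
      have hr2 : pathSize r = 2 := by omega
      have hne : r ≠ [] := by rintro rfl; simp at hr2
      obtain ⟨y, r', rfl⟩ := List.exists_cons_of_ne_nil hne
      have hzig := hp.2.2.1
      rw [zig_cons, chain_cons'] at hzig
      have hy := hzig.1
      cases y <;> simp [KStep.dy] at hy
      · -- y = Nb
        exfalso
        simp [KStep.dx] at hr2
        have hr'1 : pathSize r' = 1 := by omega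
        have hlen := length_le_size r'
        rw [hr'1] at hlen
        have hne' : r' ≠ [] := by rintro rfl; simp at hr'1
        have hlen1 : r'.length = 1 := by
          have := List.length_pos_iff.mpr hne'; omega
        obtain ⟨z, rfl⟩ := List.length_eq_one_iff.mp hlen1
        have h2 := hp.2.1
        cases z <;> simp [KStep.dy, KStep.dx] at h2 hr'1 <;> omega
      · -- y = Eb
        simp [KStep.dx] at hr2
        have : r' = [] := size_eq_zero (by omega)
        subst this
        rfl
    · right
      have h1 := hp.1
      simp [KStep.dx] at h1
      have hr2 : pathSize r = 2 := by omega
      have hne : r ≠ [] := by rintro rfl; simp at hr2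
      obtain ⟨y, r', rfl⟩ := List.exists_cons_of_ne_nil hne
      have hzig := hp.2.2.1
      rw [zig_cons, chain_cons'] at hzig
      have hy := hzig.1
      cases y <;> simp [KStep.dy] at hy
      · -- y = N
        exfalso
        simp [KStep.dx] at hr2
        have hr'1 : pathSize r' = 1 := by omega
        have hlen := length_le_size r'
        rw [hr'1] at hlen
        have hne' : r' ≠ [] := by rintro rfl; simp at hr'1
        have hlen1 : r'.length = 1 := by
          have := List.length_pos_iff.mpr hne'; omega
        obtain ⟨z, rfl⟩ := List.length_eq_one_iff.mp hlen1
        have h2 := hp.2.1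
        cases z <;> simp [KStep.dy, KStep.dx] at h2 hr'1 <;> omega
      · -- y = E
        simp [KStep.dx] at hr2
        have : r' = [] := size_eq_zero (by omega)
        subst this
        rfl
  · rintro (rfl | rfl)
    · have := (transfer_E_Eb 4 []).mpr ⟨by norm_num [mem_SS_nil], Or.inl rfl⟩
      simpa using this
    · have := (transfer_Eb_E 4 []).mpr ⟨by norm_num [mem_SS_nil], Or.inl rfl⟩
      simpa using this

/-- surgery inserting a short bounce after the first step (size +1). -/
def g1 : List KStep → List KStep
  | KStep.E :: r => KStep.Eb :: KStep.N :: r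
  | KStep.Eb :: r => KStep.E :: KStep.Nb :: r
  | t => t

/-- surgery prepending a small arch (size +4). -/
def g4 : List KStep → List KStep
  | KStep.E :: r => KStep.E :: KStep.Eb :: KStep.E :: r
  | KStep.Eb :: r => KStep.Eb :: KStep.E :: KStep.Eb :: r
  | t => t

lemma SS_union (n : ℤ) (hn : 5 ≤ n) :
    SS n = g1 '' SS (n - 1) ∪ g4 '' SS (n - 4) := by
  ext p
  constructor
  · intro hp
    rcases SS_cons_cases hp (by omega) with ⟨r, rfl⟩ | ⟨r, rfl⟩
    · -- p = E :: r
      have hne : r ≠ [] := by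
        rintro rfl
        have := hp.1; simp [KStep.dx] at this; omega
      obtain ⟨y, r', rfl⟩ := List.exists_cons_of_ne_nil hne
      have hzig := hp.2.2.1
      rw [zig_cons, chain_cons'] at hzig
      have hy := hzig.1
      cases y <;> simp [KStep.dy] at hy
      · -- y = Nb : comes from g1 (Eb :: r')
        left
        refine ⟨KStep.Eb :: r', (transfer_E_Nb n r').mp hp, rfl⟩
      · -- y = Eb : comes from g4
        right
        have h := (transfer_E_Eb n r').mp hp
        rcases h.2 with rfl | ⟨r'', rfl⟩
        · exfalso
          have := h.1.1
          simp at this; omega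
        · exact ⟨KStep.E :: r'', h.1, rfl⟩
    · -- p = Eb :: r
      have hne : r ≠ [] := by
        rintro rfl
        have := hp.1; simp [KStep.dx] at this; omega
      obtain ⟨y, r', rfl⟩ := List.exists_cons_of_ne_nil hne
      have hzig := hp.2.2.1
      rw [zig_cons, chain_cons'] at hzig
      have hy := hzig.1
      cases y <;> simp [KStep.dy] at hy
      · -- y = N : from g1 (E :: r')
        left
        refine ⟨KStep.E :: r', (transfer_Eb_N n r').mp hp, rfl⟩
      · -- y = E : from g4
        right
        have h := (transfer_Eb_E n r').mp hp
        rcases h.2 with rfl | ⟨r'', rfl⟩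
        · exfalso
          have := h.1.1
          simp at this; omega
        · exact ⟨KStep.Eb :: r'', h.1, rfl⟩
  · rintro (⟨t, ht, rfl⟩ | ⟨s, hs, rfl⟩)
    · rcases SS_cons_cases ht (by omega) with ⟨r, rfl⟩ | ⟨r, rfl⟩
      · show (KStep.Eb :: KStep.N :: r) ∈ SS n
        refine (transfer_Eb_N n r).mpr ?_
        exact ht
      · show (KStep.E :: KStep.Nb :: r) ∈ SS n
        exact (transfer_E_Nb n r).mpr ht
    · rcases SS_cons_cases hs (by omega) with ⟨r, rfl⟩ | ⟨r, rfl⟩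
      · show (KStep.E :: KStep.Eb :: KStep.E :: r) ∈ SS n
        exact (transfer_E_Eb n (KStep.E :: r)).mpr ⟨hs, Or.inr ⟨r, rfl⟩⟩
      · show (KStep.Eb :: KStep.E :: KStep.Eb :: r) ∈ SS n
        exact (transfer_Eb_E n (KStep.Eb :: r)).mpr ⟨hs, Or.inr ⟨r, rfl⟩⟩

lemma SS_rec (n : ℤ) (hn : 5 ≤ n) :
    (SS n).ncard = (SS (n - 1)).ncard + (SS (n - 4)).ncard := by
  have hinj1 : Set.InjOn g1 (SS (n - 1)) := by
    intro t1 h1 t2 h2 heq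
    rcases SS_cons_cases h1 (by omega) with ⟨r1, rfl⟩ | ⟨r1, rfl⟩ <;>
      rcases SS_cons_cases h2 (by omega) with ⟨r2, rfl⟩ | ⟨r2, rfl⟩ <;>
      simp [g1] at heq <;> simp [heq]
  have hinj4 : Set.InjOn g4 (SS (n - 4)) := by
    intro t1 h1 t2 h2 heq
    rcases SS_cons_cases h1 (by omega) with ⟨r1, rfl⟩ | ⟨r1, rfl⟩ <;>
      rcases SS_cons_cases h2 (by omega) with ⟨r2, rfl⟩ | ⟨r2, rfl⟩ <;>
      simp [g4] at heq <;> simp [heq]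
  have hdisj : Disjoint (g1 '' SS (n - 1)) (g4 '' SS (n - 4)) := by
    rw [Set.disjoint_left]
    rintro p ⟨t, ht, rfl⟩ ⟨s, hs, hgs⟩
    rcases SS_cons_cases ht (by omega) with ⟨r1, rfl⟩ | ⟨r1, rfl⟩ <;>
      rcases SS_cons_cases hs (by omega) with ⟨r2, rfl⟩ | ⟨r2, rfl⟩ <;>
      simp [g1, g4] at hgs
  rw [SS_union n hn, Set.ncard_union_eq hdisj ((SS_finite (n-1)).image g1)
    ((SS_finite (n-4)).image g4),
    Set.ncard_image_of_injOn hinj1, Set.ncard_image_of_injOn hinj4]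

def bounce : Bool → ℕ → List KStep
  | s, 0 => [if s then KStep.Eb else KStep.E]
  | s, j + 1 => (if s then KStep.Nb else KStep.N) :: bounce (!s) j

lemma bounce_size : ∀ (j : ℕ) (s : Bool), pathSize (bounce s j) = (j : ℤ) + 2 := by
  intro j
  induction j with
  | zero => intro s; cases s <;> simp [bounce, KStep.dx]
  | succ j ih => intro s; cases s <;> simp [bounce, KStep.dx, ih] <;> push_cast <;> ring

lemma bounce_alt : ∀ (j : ℕ) (s : Bool), pathAlt (bounce s j) = if s then -1 else 1 := by
  intro j
  induction j with
  | zero => intro s; cases s <;> simp [bounce, KStep.dy]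
  | succ j ih => intro s; cases s <;> simp [bounce, KStep.dy, ih]

@[simp] lemma dy_N : KStep.N.dy = 2 := rfl
@[simp] lemma dy_Nb : KStep.Nb.dy = -2 := rfl
@[simp] lemma dy_E : KStep.E.dy = 1 := rfl
@[simp] lemma dy_Eb : KStep.Eb.dy = -1 := rfl

lemma bounce_chain : ∀ (j : ℕ) (s : Bool) (g : KStep),
    (if s then 0 < g.dy else g.dy < 0) →
    List.Chain (fun a b => a.dy * b.dy < 0) g (bounce s j) := by
  intro j
  induction j with
  | zero =>
    intro s g hg
    cases s
    · simp only [if_false, Bool.false_eq_true] at hg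
      show List.Chain _ g [KStep.E]
      rw [chain_cons']
      refine ⟨by simp; omega, List.Chain.nil⟩
    · simp only [if_true] at hg
      show List.Chain _ g [KStep.Eb]
      rw [chain_cons']
      refine ⟨by simp; omega, List.Chain.nil⟩
  | succ j ih =>
    intro s g hg
    cases s
    · simp only [if_false, Bool.false_eq_true] at hg
      show List.Chain _ g (KStep.N :: bounce true j)
      rw [chain_cons']
      exact ⟨by simp; omega, ih true KStep.N (by simp)⟩
    · simp only [if_true] at hg
      show List.Chain _ g (KStep.Nb :: bounce false j)
      rw [chain_cons']
      exact ⟨by simp; omega, ih false KStep.Nb (by simp)⟩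

lemma bounce_prefix_alt : ∀ (j : ℕ) (s : Bool) (q : List KStep),
    q <+: bounce s j → q = bounce s j ∨ pathAlt q = 0 ∨
      pathAlt q = (if s then -2 else 2) := by
  intro j
  induction j with
  | zero =>
    intro s q hq
    cases q with
    | nil => right; left; rfl
    | cons a t =>
      left
      cases s <;> simp [bounce] at hq ⊢ <;> exact hq
  | succ j ih =>
    intro s q hq
    cases q with
    | nil => right; left; rfl
    | cons a t =>
      rw [show bounce s (j+1) = (if s then KStep.Nb else KStep.N) :: bounce (!s) j from rfl,
        List.cons_prefix_cons] at hq
      obtain ⟨rfl, ht⟩ := hq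
      rcases ih (!s) t ht with rfl | h0 | h2
      · left; rfl
      · right; right
        cases s <;> simp [KStep.dy, h0]
      · right; left
        cases s <;> simp at h2 <;> simp [KStep.dy, h2]

/-- classification of the bouncing part of a first-return path. -/
lemma cls : ∀ (p : List KStep) (s : Bool) (g : KStep),
    (if s then 0 < g.dy else g.dy < 0) →
    List.Chain (fun a b => a.dy * b.dy < 0) g p →
    (∀ q, q <+: p → q ≠ p → (if s then (1:ℤ) else -1) + pathAlt q ≠ 0) →
    (if s then (1:ℤ) else -1) + pathAlt p = 0 →
    ∃ j, p = bounce s j := by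
  intro p
  induction p with
  | nil =>
    intro s g _ _ _ hend
    cases s <;> simp at hend
  | cons x p ih =>
    intro s g hg hch hint hend
    rw [chain_cons'] at hch
    obtain ⟨hrel, hch'⟩ := hch
    cases s
    · -- s = false : need x.dy > 0
      simp only [if_false, Bool.false_eq_true] at hg hint hend ⊢
      have hx : 0 < x.dy := by
        rcases lt_trichotomy x.dy 0 with h | h | h
        · exfalso; nlinarith
        · exfalso; rw [h] at hrel; simp at hrel
        · exact h
      cases x <;> simp [KStep.dy] at hx
      · -- x = N
        have hne : p ≠ [] := by
          rintro rfl
          simp [KStep.dy] at hend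
        obtain ⟨j, rfl⟩ := ih true KStep.N (by simp [KStep.dy]) hch'
          (by
            intro q hq hqe
            have := hint (KStep.N :: q) (List.cons_prefix_cons.mpr ⟨rfl, hq⟩)
              (by simp [hqe])
            simp [KStep.dy] at this ⊢
            omega)
          (by simp [KStep.dy] at hend ⊢; omega)
        exact ⟨j + 1, by simp [bounce]⟩
      · -- x = E
        have hpnil : p = [] := by
          by_contra hne
          have := hint [KStep.E] (List.cons_prefix_cons.mpr ⟨rfl, by simp⟩)
            (by intro h; injection h with _ h2; exact hne h2.symm)
          simp [KStep.dy] at this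
        subst hpnil
        exact ⟨0, by simp [bounce]⟩
    · -- s = true : x.dy < 0
      simp only [if_true] at hg hint hend ⊢
      have hx : x.dy < 0 := by
        rcases lt_trichotomy x.dy 0 with h | h | h
        · exact h
        · exfalso; rw [h] at hrel; simp at hrel
        · exfalso; nlinarith
      cases x <;> simp [KStep.dy] at hx
      · -- x = Nb
        have hne : p ≠ [] := by
          rintro rfl
          simp [KStep.dy] at hend
        obtain ⟨j, rfl⟩ := ih false KStep.Nb (by simp [KStep.dy]) hch'
          (by
            intro q hq hqe
            have := hint (KStep.Nb :: q) (List.cons_prefix_cons.mpr ⟨rfl, hq⟩)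
              (by simp [hqe])
            simp [KStep.dy] at this ⊢
            omega)
          (by simp [KStep.dy] at hend ⊢; omega)
        exact ⟨j + 1, by simp [bounce]⟩
      · -- x = Eb
        have hpnil : p = [] := by
          by_contra hne
          have := hint [KStep.Eb] (List.cons_prefix_cons.mpr ⟨rfl, by simp⟩)
            (by intro h; injection h with _ h2; exact hne h2.symm)
          simp [KStep.dy] at this
        subst hpnil
        exact ⟨0, by simp [bounce]⟩

/-- positive-region invariant: a path that stays away from 0 until its end,
starting high enough, ends with a down step; parity of its length is determined. -/
lemma zinv_pos : ∀ (p : List KStep) (s : Bool) (g : KStep) (a : ℤ),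
    (if s then 0 < g.dy else g.dy < 0) →
    (if s then 2 ≤ a else 1 ≤ a) →
    List.Chain (fun a b => a.dy * b.dy < 0) g p →
    (∀ q, q <+: p → q ≠ p → a + pathAlt q ≠ 0) →
    a + pathAlt p = 0 →
    (if s then Odd p.length else Even p.length) := by
  intro p
  induction p with
  | nil =>
    intro s g a _ ha _ _ hend
    cases s <;> simp at ha hend ⊢ <;> omega
  | cons x p ih =>
    intro s g a hg ha hch hint hend
    rw [chain_cons'] at hch
    obtain ⟨hrel, hch'⟩ := hch
    cases s
    · -- s = false, last step was down, a ≥ 1, next step up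
      simp only [if_false, Bool.false_eq_true] at hg ha hint hend ⊢
      have hx : 0 < x.dy := by
        rcases lt_trichotomy x.dy 0 with h | h | h
        · exfalso; nlinarith
        · exfalso; rw [h] at hrel; simp at hrel
        · exact h
      have hxle : x.dy ≤ 2 := by cases x <;> simp
      have hp : p ≠ [] := by
        rintro rfl
        simp at hend
        omega
      have := ih true x (a + x.dy) (by simp [hx]) (by simp; omega) hch'
        (by
          intro q hq hqe
          have := hint (x :: q) (List.cons_prefix_cons.mpr ⟨rfl, hq⟩) (by simp [hqe])
          simp at this ⊢
          omega)
        (by simp at hend ⊢; omega)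
      simp only [if_true, Bool.false_eq_true, if_false] at this
      rw [List.length_cons]
      exact this.add_one
    · -- s = true, a ≥ 2, next step down
      simp only [if_true] at hg ha hint hend ⊢
      have hx : x.dy < 0 := by
        rcases lt_trichotomy x.dy 0 with h | h | h
        · exact h
        · exfalso; rw [h] at hrel; simp at hrel
        · exfalso; nlinarith
      have hxge : -2 ≤ x.dy := by cases x <;> simp
      by_cases hp : p = []
      · subst hp; simp
      · have hne : a + x.dy ≠ 0 := by
          have := hint [x] (List.cons_prefix_cons.mpr ⟨rfl, by simp⟩)
            (by intro h; injection h with _ h2; exact hp h2.symm)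
          simpa using this
        have := ih false x (a + x.dy) (by simp [hx]) (by simp; omega) hch'
          (by
            intro q hq hqe
            have := hint (x :: q) (List.cons_prefix_cons.mpr ⟨rfl, hq⟩) (by simp [hqe])
            simp at this ⊢
            omega)
          (by simp at hend ⊢; omega)
        simp only [if_true, Bool.false_eq_true, if_false] at this
        rw [List.length_cons]
        exact this.add_one

/-- negative-region invariant (mirror image). -/
lemma zinv_neg : ∀ (p : List KStep) (s : Bool) (g : KStep) (a : ℤ),
    (if s then 0 < g.dy else g.dy < 0) →
    (if s then a ≤ -1 else a ≤ -2) →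
    List.Chain (fun a b => a.dy * b.dy < 0) g p →
    (∀ q, q <+: p → q ≠ p → a + pathAlt q ≠ 0) →
    a + pathAlt p = 0 →
    (if s then Even p.length else Odd p.length) := by
  intro p
  induction p with
  | nil =>
    intro s g a _ ha _ _ hend
    cases s <;> simp at ha hend ⊢ <;> omega
  | cons x p ih =>
    intro s g a hg ha hch hint hend
    rw [chain_cons'] at hch
    obtain ⟨hrel, hch'⟩ := hch
    cases s
    · -- s = false, a ≤ -2, next step up
      simp only [if_false, Bool.false_eq_true] at hg ha hint hend ⊢
      have hx : 0 < x.dy := by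
        rcases lt_trichotomy x.dy 0 with h | h | h
        · exfalso; nlinarith
        · exfalso; rw [h] at hrel; simp at hrel
        · exact h
      have hxle : x.dy ≤ 2 := by cases x <;> simp
      by_cases hp : p = []
      · subst hp; simp
      · have hne : a + x.dy ≠ 0 := by
          have := hint [x] (List.cons_prefix_cons.mpr ⟨rfl, by simp⟩)
            (by intro h; injection h with _ h2; exact hp h2.symm)
          simpa using this
        have := ih true x (a + x.dy) (by simp [hx]) (by simp; omega) hch'
          (by
            intro q hq hqe
            have := hint (x :: q) (List.cons_prefix_cons.mpr ⟨rfl, hq⟩) (by simp [hqe])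
            simp at this ⊢
            omega)
          (by simp at hend ⊢; omega)
        simp only [if_true, Bool.false_eq_true, if_false] at this
        rw [List.length_cons]
        exact this.add_one
    · -- s = true, a ≤ -1, next step down
      simp only [if_true] at hg ha hint hend ⊢
      have hx : x.dy < 0 := by
        rcases lt_trichotomy x.dy 0 with h | h | h
        · exact h
        · exfalso; rw [h] at hrel; simp at hrel
        · exfalso; nlinarith
      have hxge : -2 ≤ x.dy := by cases x <;> simp
      have hp : p ≠ [] := by
        rintro rfl
        simp at hend
        omega
      have := ih false x (a + x.dy) (by simp [hx]) (by simp; omega) hch'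
        (by
          intro q hq hqe
          have := hint (x :: q) (List.cons_prefix_cons.mpr ⟨rfl, hq⟩) (by simp [hqe])
          simp at this ⊢
          omega)
        (by simp at hend ⊢; omega)
      simp only [if_true, Bool.false_eq_true, if_false] at this
      rw [List.length_cons]
      exact this.add_one

def WW (n : ℤ) : Set (List KStep) :=
  {p | pathSize p = n ∧ pathAlt p = 0 ∧ IsZigzag p ∧
    ∀ q, q <+: p → pathAlt q = 0 → (q = [] ∨ q = p)}

lemma bounce_mem_E (j : ℕ) : (KStep.E :: bounce true j) ∈ WW ((j : ℤ) + 4) := by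
  refine ⟨?_, ?_, ?_, ?_⟩
  · rw [pathSize_cons, bounce_size]; simp [KStep.dx]; ring
  · rw [pathAlt_cons, bounce_alt]; simp
  · rw [zig_cons]; exact bounce_chain j true KStep.E (by simp)
  · rw [forall_prefix_cons]
    refine ⟨by simp, ?_⟩
    intro t ht h0
    rcases bounce_prefix_alt j true t ht with rfl | ha | ha
    · right; rfl
    · exfalso; rw [pathAlt_cons, ha] at h0; simp at h0
    · exfalso; rw [pathAlt_cons] at h0; simp at ha; rw [ha] at h0; simp at h0

lemma bounce_mem_Eb (j : ℕ) : (KStep.Eb :: bounce false j) ∈ WW ((j : ℤ) + 4) := by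
  refine ⟨?_, ?_, ?_, ?_⟩
  · rw [pathSize_cons, bounce_size]; simp [KStep.dx]; ring
  · rw [pathAlt_cons, bounce_alt]; simp
  · rw [zig_cons]; exact bounce_chain j false KStep.Eb (by simp)
  · rw [forall_prefix_cons]
    refine ⟨by simp, ?_⟩
    intro t ht h0
    rcases bounce_prefix_alt j false t ht with rfl | ha | ha
    · right; rfl
    · exfalso; rw [pathAlt_cons, ha] at h0; simp at h0
    · exfalso; rw [pathAlt_cons] at h0; simp at ha; rw [ha] at h0; simp at h0

lemma WW_eq (n : ℕ) (ho : Odd n) (h5 : 5 ≤ n) :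
    WW (n : ℤ) =
      {KStep.E :: bounce true (n - 4), KStep.Eb :: bounce false (n - 4)} := by
  ext p
  simp only [Set.mem_insert_iff, Set.mem_singleton_iff]
  constructor
  · rintro ⟨hs, ha, hz, hax⟩
    have hne : p ≠ [] := by
      rintro rfl; simp at hs; omega
    obtain ⟨x, r, rfl⟩ := List.exists_cons_of_ne_nil hne
    rw [zig_cons] at hz
    rw [pathAlt_cons] at ha
    have hint : ∀ (q : List KStep), q <+: r → q ≠ r → x.dy + pathAlt q ≠ 0 := by
      intro q hq hqe h0
      have := hax (x :: q) (List.cons_prefix_cons.mpr ⟨rfl, hq⟩)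
        (by rw [pathAlt_cons]; exact h0)
      rcases this with h | h
      · exact List.cons_ne_nil _ _ h
      · injection h with _ h2; exact hqe h2
    have hparity : ¬ Odd r.length := by
      intro hodd
      have hpar := size_parity (x :: r)
      rw [hs, List.length_cons] at hpar
      have h2 : pathAlt (x :: r) = 0 := by rw [pathAlt_cons]; exact ha
      rw [h2] at hpar
      rw [Int.even_iff] at hpar
      have h3 := Nat.odd_iff.mp hodd
      have h4 := Nat.odd_iff.mp ho
      push_cast at hpar
      omega
    cases x
    · -- N
      exfalso
      have hO := zinv_pos r true KStep.N 2 (by simp) (by norm_num) hz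
        (by simpa using hint) (by simp at ha ⊢; omega)
      exact hparity (by simpa using hO)
    · -- Nb
      exfalso
      have hO := zinv_neg r false KStep.Nb (-2) (by simp) (by norm_num) hz
        (by simpa using hint) (by simp at ha ⊢; omega)
      exact hparity (by simpa using hO)
    · -- E
      obtain ⟨j, rfl⟩ := cls r true KStep.E (by simp) hz
        (by simpa using hint) (by simp at ha ⊢; omega)
      have hj : j = n - 4 := by
        rw [pathSize_cons, bounce_size] at hs
        simp [KStep.dx] at hs
        omega
      subst hj
      left; rfl
    · -- Eb
      obtain ⟨j, rfl⟩ := cls r false KStep.Eb (by simp) hz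
        (by simpa using hint) (by simp at ha ⊢; omega)
      have hj : j = n - 4 := by
        rw [pathSize_cons, bounce_size] at hs
        simp [KStep.dx] at hs
        omega
      subst hj
      right; rfl
  · have hcast : ((n - 4 : ℕ) : ℤ) + 4 = (n : ℤ) := by
      rw [Nat.cast_sub (by omega)]; ring
    rintro (rfl | rfl)
    · exact hcast ▸ bounce_mem_E (n - 4)
    · exact hcast ▸ bounce_mem_Eb (n - 4)

lemma WW_card (n : ℕ) (ho : Odd n) (h5 : 5 ≤ n) : (WW (n : ℤ)).ncard = 2 := by
  rw [WW_eq n ho h5]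
  exact Set.ncard_pair (by simp)


theorem stmt19 (c : ℕ → ℕ)
    (hc : ∀ n : ℕ, c n =
      Nat.card {p : List KStep //
        pathSize p = (n : ℤ) ∧ pathAlt p = 0 ∧ IsZigzag p ∧
          ∀ q : List KStep, q <+: p → -1 ≤ pathAlt q ∧ pathAlt q ≤ 1}) :
    (∀ n : ℕ, Odd n → 5 ≤ n →
      Nat.card {p : List KStep //
        pathSize p = (n : ℤ) ∧ pathAlt p = 0 ∧ IsZigzag p ∧
          ∀ q : List KStep, q <+: p → pathAlt q = 0 → (q = [] ∨ q = p)} = 2) ∧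
    c 0 = 1 ∧ c 1 = 0 ∧ c 2 = 0 ∧ c 3 = 0 ∧ c 4 = 2 ∧
    ∀ n : ℕ, 5 ≤ n → c n = c (n - 1) + c (n - 4) := by
  have key : ∀ n : ℕ, c n = (SS (n : ℤ)).ncard := by
    intro n
    rw [hc n]
    exact Nat.card_coe_set_eq (SS (n : ℤ))
  refine ⟨?_, ?_, ?_, ?_, ?_, ?_, ?_⟩
  · intro n ho h5
    have : Nat.card {p : List KStep //
        pathSize p = (n : ℤ) ∧ pathAlt p = 0 ∧ IsZigzag p ∧
          ∀ q : List KStep, q <+: p → pathAlt q = 0 → (q = [] ∨ q = p)} =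
        (WW (n : ℤ)).ncard := Nat.card_coe_set_eq (WW (n : ℤ))
    rw [this, WW_card n ho h5]
  · rw [key 0]; norm_num [SS_zero]
  · rw [key 1]; norm_num [SS_one]
  · rw [key 2]; norm_num [SS_two]
  · rw [key 3]; norm_num [SS_three]
  · rw [key 4]; norm_num [SS_four]
    exact Set.ncard_pair (by simp)
  · intro n h5
    rw [key n, key (n - 1), key (n - 4)]
    have e1 : ((n - 1 : ℕ) : ℤ) = (n : ℤ) - 1 := by omega
    have e4 : ((n - 4 : ℕ) : ℤ) = (n : ℤ) - 4 := by omega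
    rw [e1, e4, SS_rec (n : ℤ) (by omega)]
end
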